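/- arXiv:0909.0840 — 12 statements merged into one kernel-verified Lean document; each statement's English description precedes it below -/
import Mathlib

section
/- Let M be a matroid of rank r on ground set E with a partition E = E1 ∪ E2 (E1 ∩ E2 = ∅). Let r1, r2 be the ranks of the restrictions M|E1 and M|E2, and suppose there are integers 0 < a1 < r1 and 0 < a2 < r2 with r1 + r2 = r + a1 + a2, and such that for every independent set X ⊆ E1 of M with |X| ≤ r1 − a1 and every independent set Y ⊆ E2 of M with |Y| ≤ r2 − a2, the union X ∪ Y is independent in M. Then the collection B1 = {B a base of M : |B ∩ E1| ≤ r1 − a1} satisfies the basis exchange axiom, i.e., it is the set of bases of a matroid. -/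
/-!
For `e ∈ B \ B'` the ordinary base exchange `B - e + f` keeps `|B ∩ E1| ≤ r1 - a1` unless
`e ∉ E1` and `|B ∩ E1| = r1 - a1`. In that case `|B \ E1| ≤ |B' \ E1|`, so `(B \ E1) - e` can be
augmented by some `f ∈ B' \ E1`, giving an independent `Y ⊆ E2` with `|Y| = |B \ E1| ≤ r2 - a2`
by (P1). By (P2), `(B ∩ E1) ∪ Y = B - e + f` is independent, hence a base, and its `E1`-part is
still `B ∩ E1`.
-/

open Set

namespace Set

variable {α : Type*} {B S : Set α} {e f : α}

lemma ncard_insert_sdiff_inter_le (hB : B.Finite) :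
    (insert f (B \ {e}) ∩ S).ncard ≤ (B ∩ S).ncard + 1 := by
  refine (ncard_le_ncard ?_ ((hB.inter_of_left S).insert f)).trans (ncard_insert_le _ _)
  rintro x ⟨rfl | ⟨hxB, -⟩, hxS⟩
  exacts [mem_insert _ _, mem_insert_of_mem _ ⟨hxB, hxS⟩]

lemma ncard_insert_sdiff_inter_le_of_mem (hB : B.Finite) (he : e ∈ B ∩ S) :
    (insert f (B \ {e}) ∩ S).ncard ≤ (B ∩ S).ncard := by
  have hfin : (B ∩ S).Finite := hB.inter_of_left S
  have hsub : insert f (B \ {e}) ∩ S ⊆ insert f ((B ∩ S) \ {e}) := by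
    rintro x ⟨rfl | ⟨hxB, hxe⟩, hxS⟩
    exacts [mem_insert _ _, mem_insert_of_mem _ ⟨⟨hxB, hxS⟩, hxe⟩]
  calc (insert f (B \ {e}) ∩ S).ncard ≤ (insert f ((B ∩ S) \ {e})).ncard :=
        ncard_le_ncard hsub (hfin.sdiff.insert f)
    _ ≤ ((B ∩ S) \ {e}).ncard + 1 := ncard_insert_le _ _
    _ = (B ∩ S).ncard := ncard_sdiff_singleton_add_one he hfin

lemma ncard_insert_sdiff_inter_le_of_notMem (hB : B.Finite) (hf : f ∉ S) :
    (insert f (B \ {e}) ∩ S).ncard ≤ (B ∩ S).ncard := by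
  refine ncard_le_ncard ?_ (hB.inter_of_left S)
  rintro x ⟨rfl | ⟨hxB, -⟩, hxS⟩
  exacts [(hf hxS).elim, ⟨hxB, hxS⟩]

lemma inter_union_insert_sdiff_sdiff (he : e ∉ S) :
    B ∩ S ∪ insert f ((B \ S) \ {e}) = insert f (B \ {e}) := by
  ext x
  by_cases hx : x = e
  · subst hx
    simp [he]
  · simp only [mem_union, mem_inter_iff, mem_insert_iff, mem_sdiff, mem_singleton_iff, hx]
    tauto

end Set

namespace Matroid

variable {α : Type*} {M : Matroid α} {B B' S : Set α} {e : α}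

lemma IsBase.exists_insert_sdiff_indep_of_ncard_inter_le [M.RankFinite] (hB : M.IsBase B)
    (hB' : M.IsBase B') (hle : (B' ∩ S).ncard ≤ (B ∩ S).ncard) (he : e ∈ B \ B')
    (heS : e ∉ S) :
    ∃ f ∈ B' \ B, f ∉ S ∧ M.Indep (insert f ((B \ S) \ {e})) := by
  have hsplit := ncard_inter_add_ncard_sdiff_eq_ncard B S hB.finite
  have hsplit' := ncard_inter_add_ncard_sdiff_eq_ncard B' S hB'.finite
  have hcard := hB.ncard_eq_ncard_of_isBase hB'
  have hdel := ncard_sdiff_singleton_add_one (show e ∈ B \ S from ⟨he.1, heS⟩) hB.finite.sdiff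
  have hlt : ((B \ S) \ {e}).encard < (B' \ S).encard := by
    rw [← hB.finite.sdiff.sdiff.cast_ncard_eq, ← hB'.finite.sdiff.cast_ncard_eq]
    exact_mod_cast (by omega : ((B \ S) \ {e}).ncard < (B' \ S).ncard)
  obtain ⟨f, ⟨⟨hfB', hfS⟩, hfI⟩, hind⟩ :=
    (hB.indep.subset (sdiff_subset.trans sdiff_subset)).augment
      (hB'.indep.subset sdiff_subset) hlt
  have hfB : f ∉ B := fun hfB ↦ hfI ⟨⟨hfB, hfS⟩, fun hfe ↦ he.2 (hfe ▸ hfB')⟩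
  exact ⟨f, ⟨hfB', hfB⟩, hfS, hind⟩

end Matroid

theorem stmt_1_general {α : Type*} (M : Matroid α) (hfin : M.E.Finite)
    (E1 E2 : Set α) (hU : E1 ∪ E2 = M.E)
    (r r1 r2 a1 a2 : ℕ)
    (hr : ∀ B, M.IsBase B → B.ncard = r)
    (hP1 : r1 + r2 = r + a1 + a2)
    (hP2 : ∀ X Y : Set α, X ⊆ E1 → Y ⊆ E2 → M.Indep X → M.Indep Y →
      X.ncard ≤ r1 - a1 → Y.ncard ≤ r2 - a2 → M.Indep (X ∪ Y)) :
    Matroid.ExchangeProperty (fun B => M.IsBase B ∧ (B ∩ E1).ncard ≤ r1 - a1) := by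
  have : M.Finite := ⟨hfin⟩
  rintro B B' ⟨hB, hBE1⟩ ⟨hB', hB'E1⟩ e he
  by_cases heE1 : e ∈ E1
  · obtain ⟨f, hf, hfB⟩ := hB.exchange hB' he
    exact ⟨f, hf, hfB,
      (ncard_insert_sdiff_inter_le_of_mem hB.finite ⟨he.1, heE1⟩).trans hBE1⟩
  obtain hlt | heq := hBE1.lt_or_eq
  · obtain ⟨f, hf, hfB⟩ := hB.exchange hB' he
    exact ⟨f, hf, hfB, (ncard_insert_sdiff_inter_le hB.finite).trans hlt⟩
  obtain ⟨f, hf, hfE1, hind⟩ :=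
    hB.exists_insert_sdiff_indep_of_ncard_inter_le hB' (hB'E1.trans heq.ge) he heE1
  have hE2 : M.E \ E1 ⊆ E2 := sdiff_subset_iff.2 hU.ge
  have hYE2 : insert f ((B \ E1) \ {e}) ⊆ E2 :=
    insert_subset (hE2 ⟨hB'.subset_ground hf.1, hfE1⟩)
      (sdiff_subset.trans ((sdiff_subset_sdiff_left hB.subset_ground).trans hE2))
  have hYcard : (insert f ((B \ E1) \ {e})).ncard ≤ r2 - a2 := by
    rw [ncard_exchange (s := B \ E1) (fun h ↦ hf.2 h.1) ⟨he.1, heE1⟩]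
    have := ncard_inter_add_ncard_sdiff_eq_ncard B E1 hB.finite
    have := hr B hB
    omega
  have hindep := hP2 _ _ inter_subset_right hYE2 (hB.indep.subset inter_subset_left) hind
    heq.le hYcard
  rw [inter_union_insert_sdiff_sdiff heE1] at hindep
  exact ⟨f, hf, hB.exchange_isBase_of_indep hf.2 hindep,
    (ncard_insert_sdiff_inter_le_of_notMem hB.finite hfE1).trans hBE1⟩

theorem stmt_1 {α : Type*} (M : Matroid α) (hfin : M.E.Finite)
    (E1 E2 : Set α) (hU : E1 ∪ E2 = M.E) (hdisj : Disjoint E1 E2)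
    (r r1 r2 a1 a2 : ℕ)
    (hr : ∀ B, M.IsBase B → B.ncard = r)
    (hr1 : ∀ B, (M.restrict E1).IsBase B → B.ncard = r1)
    (hr2 : ∀ B, (M.restrict E2).IsBase B → B.ncard = r2)
    (ha1 : 0 < a1) (ha1r : a1 < r1) (ha2 : 0 < a2) (ha2r : a2 < r2)
    (hP1 : r1 + r2 = r + a1 + a2)
    (hP2 : ∀ X Y : Set α, X ⊆ E1 → Y ⊆ E2 → M.Indep X → M.Indep Y →
      X.ncard ≤ r1 - a1 → Y.ncard ≤ r2 - a2 → M.Indep (X ∪ Y)) :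
    Matroid.ExchangeProperty (fun B => M.IsBase B ∧ (B ∩ E1).ncard ≤ r1 - a1) :=
  stmt_1_general M hfin E1 E2 hU r r1 r2 a1 a2 hr hP1 hP2
end

section
/- Let M be a matroid of rank r on E with a good partition (E1,E2) with parameters a1, a2, and define B1 = {B base of M : |B ∩ E1| ≤ r1 − a1} and B2 = {B base of M : |B ∩ E2| ≤ r2 − a2}. Then B1 is a proper subset of the set of all bases of M (i.e., there exists a base of M not in B1), and similarly B2 is proper. -/
theorem Matroid.exists_isBase_isBase_restrict_inter {α : Type*} (M : Matroid α) (X : Set α) :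
    ∃ B, M.IsBase B ∧ (M.restrict X).IsBase (B ∩ X) := by
  obtain ⟨I, hI⟩ := M.exists_isBasis' X
  obtain ⟨B, hB, rfl⟩ := hI.isBasis_inter_ground.exists_isBase
  refine ⟨B, hB, ?_⟩
  rw [← Set.inter_assoc, Set.inter_right_comm, Set.inter_eq_left.2 hB.subset_ground] at hI
  exact hI.isBase_restrict

theorem stmt_4_general {α : Type*} (M : Matroid α)
    (E1 E2 : Set α)
    (r1 r2 a1 a2 : ℕ)
    (hr1 : ∀ B, (M.restrict E1).IsBase B → B.ncard = r1)
    (hr2 : ∀ B, (M.restrict E2).IsBase B → B.ncard = r2)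
    (ha1 : 0 < a1) (ha1r : a1 < r1) (ha2 : 0 < a2) (ha2r : a2 < r2) :
    (∃ B, M.IsBase B ∧ ¬((B ∩ E1).ncard ≤ r1 - a1)) ∧
      (∃ B, M.IsBase B ∧ ¬((B ∩ E2).ncard ≤ r2 - a2)) := by
  obtain ⟨B1, hB1, hB1E1⟩ := M.exists_isBase_isBase_restrict_inter E1
  obtain ⟨B2, hB2, hB2E2⟩ := M.exists_isBase_isBase_restrict_inter E2
  exact ⟨⟨B1, hB1, by rw [hr1 _ hB1E1]; omega⟩, ⟨B2, hB2, by rw [hr2 _ hB2E2]; omega⟩⟩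

theorem stmt_4 {α : Type*} (M : Matroid α) (hfin : M.E.Finite)
    (E1 E2 : Set α) (hU : E1 ∪ E2 = M.E) (hdisj : Disjoint E1 E2)
    (r r1 r2 a1 a2 : ℕ)
    (hr : ∀ B, M.IsBase B → B.ncard = r)
    (hr1 : ∀ B, (M.restrict E1).IsBase B → B.ncard = r1)
    (hr2 : ∀ B, (M.restrict E2).IsBase B → B.ncard = r2)
    (ha1 : 0 < a1) (ha1r : a1 < r1) (ha2 : 0 < a2) (ha2r : a2 < r2)
    (hP1 : r1 + r2 = r + a1 + a2)
    (hP2 : ∀ X Y : Set α, X ⊆ E1 → Y ⊆ E2 → M.Indep X → M.Indep Y →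
      X.ncard ≤ r1 - a1 → Y.ncard ≤ r2 - a2 → M.Indep (X ∪ Y)) :
    (∃ B, M.IsBase B ∧ ¬((B ∩ E1).ncard ≤ r1 - a1)) ∧
      (∃ B, M.IsBase B ∧ ¬((B ∩ E2).ncard ≤ r2 - a2)) :=
  stmt_4_general M E1 E2 r1 r2 a1 a2 hr1 hr2 ha1 ha1r ha2 ha2r
end

section
/- Let M be a matroid of rank r with a good partition (E1, E2) with parameters a1, a2, and B1, B2 as defined from it. If B ∈ B1 \ B2 and B' ∈ B2 \ B1 then the symmetric difference of B and B' has size at least 4 (equivalently, B and B' are not adjacent in the matroid base graph). -/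
/-!
Since `r = (r₁ - a₁) + (r₂ - a₂)`, a base `B` with `|B ∩ E₁| ≤ r₁ - a₁` and `|B ∩ E₂| > r₂ - a₂`
in fact has `|B ∩ E₁| < r₁ - a₁`, while `|B' ∩ E₁| > r₁ - a₁`. So `B'` has at least two more
elements in `E₁` than `B`, and symmetrically `B` has at least two more in `E₂` than `B'`; each
surplus lies in `B ∆ B'`, on disjoint sides.
-/

namespace Set

variable {α : Type*}

theorem ncard_inter_add_ncard_inter_of_subset_union {S E₁ E₂ : Set α} (hS : S ⊆ E₁ ∪ E₂)
    (hdisj : Disjoint E₁ E₂) (hfin : S.Finite) :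
    (S ∩ E₁).ncard + (S ∩ E₂).ncard = S.ncard := by
  have hdiff : S \ E₁ = S ∩ E₂ := by
    ext x
    constructor
    · rintro ⟨hxS, hxE₁⟩
      exact ⟨hxS, (hS hxS).resolve_left hxE₁⟩
    · rintro ⟨hxS, hxE₂⟩
      exact ⟨hxS, hdisj.notMem_of_mem_right hxE₂⟩
  rw [← hdiff, ncard_inter_add_ncard_sdiff_eq_ncard S E₁ hfin]

theorem ncard_inter_le_ncard_inter_add_ncard_symmDiff_inter {X Y : Set α} (E : Set α)
    (hX : X.Finite) (hY : Y.Finite) :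
    (Y ∩ E).ncard ≤ (X ∩ E).ncard + (symmDiff X Y ∩ E).ncard := by
  have hsub : (Y ∩ E) \ (X ∩ E) ⊆ symmDiff X Y ∩ E := fun x ⟨⟨hxY, hxE⟩, hxXE⟩ =>
    ⟨Or.inr ⟨hxY, fun hxX => hxXE ⟨hxX, hxE⟩⟩, hxE⟩
  have hfin : (symmDiff X Y ∩ E).Finite :=
    (hX.sdiff.union hY.sdiff).subset inter_subset_left
  calc (Y ∩ E).ncard ≤ ((Y ∩ E) \ (X ∩ E)).ncard + (X ∩ E).ncard :=
        ncard_le_ncard_sdiff_add_ncard _ _ (hX.subset inter_subset_left)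
    _ ≤ (symmDiff X Y ∩ E).ncard + (X ∩ E).ncard := by grw [ncard_le_ncard hsub hfin]
    _ = (X ∩ E).ncard + (symmDiff X Y ∩ E).ncard := add_comm _ _

end Set

open Set in
theorem stmt_5_general {α : Type*} (M : Matroid α) (hfin : M.E.Finite)
    (E1 E2 : Set α) (hU : E1 ∪ E2 = M.E) (hdisj : Disjoint E1 E2)
    (r r1 r2 a1 a2 : ℕ)
    (hr : ∀ B, M.IsBase B → B.ncard = r)
    (hP1 : r1 + r2 = r + a1 + a2) :
    ∀ B Bᾰ, M.IsBase B → M.IsBase Bᾰ →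
      (B ∩ E1).ncard ≤ r1 - a1 → ¬((B ∩ E2).ncard ≤ r2 - a2) →
      (Bᾰ ∩ E2).ncard ≤ r2 - a2 → ¬((Bᾰ ∩ E1).ncard ≤ r1 - a1) →
      4 ≤ (symmDiff B Bᾰ).ncard := by
  intro B B' hB hB' h1 h2 h3 h4
  have hBfin : B.Finite := hfin.subset hB.subset_ground
  have hB'fin : B'.Finite := hfin.subset hB'.subset_ground
  have hΔfin : (symmDiff B B').Finite := hBfin.sdiff.union hB'fin.sdiff
  have hsplit : ∀ S ⊆ M.E, S.Finite → (S ∩ E1).ncard + (S ∩ E2).ncard = S.ncard :=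
    fun S hS hSfin => ncard_inter_add_ncard_inter_of_subset_union (hU ▸ hS) hdisj hSfin
  have hB_card := hsplit B hB.subset_ground hBfin
  have hB'_card := hsplit B' hB'.subset_ground hB'fin
  have hΔ_card := hsplit _ (symmDiff_subset_union.trans
    (union_subset hB.subset_ground hB'.subset_ground)) hΔfin
  have hE1 := ncard_inter_le_ncard_inter_add_ncard_symmDiff_inter E1 hBfin hB'fin
  have hE2 := ncard_inter_le_ncard_inter_add_ncard_symmDiff_inter E2 hB'fin hBfin
  rw [symmDiff_comm] at hE2
  rw [hr B hB] at hB_card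
  rw [hr B' hB'] at hB'_card
  omega

theorem stmt_5 {α : Type*} (M : Matroid α) (hfin : M.E.Finite)
    (E1 E2 : Set α) (hU : E1 ∪ E2 = M.E) (hdisj : Disjoint E1 E2)
    (r r1 r2 a1 a2 : ℕ)
    (hr : ∀ B, M.IsBase B → B.ncard = r)
    (hr1 : ∀ B, (M.restrict E1).IsBase B → B.ncard = r1)
    (hr2 : ∀ B, (M.restrict E2).IsBase B → B.ncard = r2)
    (ha1 : 0 < a1) (ha1r : a1 < r1) (ha2 : 0 < a2) (ha2r : a2 < r2)
    (hP1 : r1 + r2 = r + a1 + a2)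
    (hP2 : ∀ X Y : Set α, X ⊆ E1 → Y ⊆ E2 → M.Indep X → M.Indep Y →
      X.ncard ≤ r1 - a1 → Y.ncard ≤ r2 - a2 → M.Indep (X ∪ Y)) :
    ∀ B Bᾰ, M.IsBase B → M.IsBase Bᾰ →
      (B ∩ E1).ncard ≤ r1 - a1 → ¬((B ∩ E2).ncard ≤ r2 - a2) →
      (Bᾰ ∩ E2).ncard ≤ r2 - a2 → ¬((Bᾰ ∩ E1).ncard ≤ r1 - a1) →
      4 ≤ (symmDiff B Bᾰ).ncard :=
  stmt_5_general M hfin E1 E2 hU hdisj r r1 r2 a1 a2 hr hP1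
end

section
/- Let M be a matroid of rank r with a good partition (E1, E2) with parameters a1, a2. Then there exists a base B of M with |B ∩ E1| = r1 − a1 and |B ∩ E2| = r2 − a2 (i.e., B1 ∩ B2 is nonempty). -/
/-!
Choose `X` inside a base of `M ↾ E1` with `|X| = r1 - a1` and `Y` inside a base of `M ↾ E2`
with `|Y| = r2 - a2`. By the second condition of a good partition `X ∪ Y` is independent, and
`|X ∪ Y| = r1 + r2 - a1 - a2 = r`, so it is a base; it meets `E1` in `X` and `E2` in `Y`.
-/

open Set

namespace Matroid

variable {α : Type*} {M : Matroid α} {B I R : Set α}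

theorem Indep.isBase_of_ncard_le (hI : M.Indep I) (hB : M.IsBase B) (hBfin : B.Finite)
    (hle : B.ncard ≤ I.ncard) : M.IsBase I := by
  obtain ⟨B', hB', hIB'⟩ := hI.exists_isBase_superset
  have hB'fin : B'.Finite := hB.finite_of_finite hBfin hB'
  rwa [eq_of_subset_of_ncard_le hIB' (by rw [hB'.ncard_eq_ncard_of_isBase hB]; exact hle) hB'fin]

theorem exists_indep_subset_ncard_eq_of_isBase_restrict {k : ℕ} (hB : (M ↾ R).IsBase B)
    (hk : k ≤ B.ncard) : ∃ X ⊆ R, M.Indep X ∧ X.ncard = k := by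
  obtain ⟨hBi, hBR⟩ := (restrict_indep_iff.1 hB.indep)
  obtain ⟨X, hXB, hX⟩ := exists_subset_card_eq hk
  exact ⟨X, hXB.trans hBR, hBi.subset hXB, hX⟩

end Matroid

theorem Set.union_inter_eq_left_of_subset_of_disjoint {α : Type*} {X Y E : Set α} (hX : X ⊆ E)
    (hY : Disjoint Y E) : (X ∪ Y) ∩ E = X := by
  rw [union_inter_distrib_right, inter_eq_left.2 hX, hY.inter_eq, union_empty]

theorem stmt_6_general {α : Type*} (M : Matroid α) (hfin : M.E.Finite)
    (E1 E2 : Set α) (hdisj : Disjoint E1 E2)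
    (r r1 r2 a1 a2 : ℕ)
    (hr : ∀ B, M.IsBase B → B.ncard = r)
    (hr1 : ∀ B, (M.restrict E1).IsBase B → B.ncard = r1)
    (hr2 : ∀ B, (M.restrict E2).IsBase B → B.ncard = r2)
    (ha1r : a1 < r1) (ha2r : a2 < r2)
    (hP1 : r1 + r2 = r + a1 + a2)
    (hP2 : ∀ X Y : Set α, X ⊆ E1 → Y ⊆ E2 → M.Indep X → M.Indep Y →
      X.ncard ≤ r1 - a1 → Y.ncard ≤ r2 - a2 → M.Indep (X ∪ Y)) :
    ∃ B, M.IsBase B ∧ (B ∩ E1).ncard = r1 - a1 ∧ (B ∩ E2).ncard = r2 - a2 := by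
  obtain ⟨B1, hB1⟩ := (M.restrict E1).exists_isBase
  obtain ⟨B2, hB2⟩ := (M.restrict E2).exists_isBase
  obtain ⟨X, hXE1, hXi, hX⟩ :=
    M.exists_indep_subset_ncard_eq_of_isBase_restrict hB1 (k := r1 - a1) (by rw [hr1 B1 hB1]; omega)
  obtain ⟨Y, hYE2, hYi, hY⟩ :=
    M.exists_indep_subset_ncard_eq_of_isBase_restrict hB2 (k := r2 - a2) (by rw [hr2 B2 hB2]; omega)
  obtain ⟨B, hB⟩ := M.exists_isBase
  have hXY : M.IsBase (X ∪ Y) := by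
    refine (hP2 X Y hXE1 hYE2 hXi hYi hX.le hY.le).isBase_of_ncard_le hB
      (hfin.subset hB.subset_ground) ?_
    rw [ncard_union_eq (hdisj.mono hXE1 hYE2) (hfin.subset hXi.subset_ground)
      (hfin.subset hYi.subset_ground), hX, hY, hr B hB]
    omega
  refine ⟨X ∪ Y, hXY, ?_, ?_⟩
  · rw [union_inter_eq_left_of_subset_of_disjoint hXE1 (hdisj.symm.mono_left hYE2), hX]
  · rw [union_comm, union_inter_eq_left_of_subset_of_disjoint hYE2 (hdisj.mono_left hXE1), hY]

theorem stmt_6 {α : Type*} (M : Matroid α) (hfin : M.E.Finite)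
    (E1 E2 : Set α) (hU : E1 ∪ E2 = M.E) (hdisj : Disjoint E1 E2)
    (r r1 r2 a1 a2 : ℕ)
    (hr : ∀ B, M.IsBase B → B.ncard = r)
    (hr1 : ∀ B, (M.restrict E1).IsBase B → B.ncard = r1)
    (hr2 : ∀ B, (M.restrict E2).IsBase B → B.ncard = r2)
    (ha1 : 0 < a1) (ha1r : a1 < r1) (ha2 : 0 < a2) (ha2r : a2 < r2)
    (hP1 : r1 + r2 = r + a1 + a2)
    (hP2 : ∀ X Y : Set α, X ⊆ E1 → Y ⊆ E2 → M.Indep X → M.Indep Y →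
      X.ncard ≤ r1 - a1 → Y.ncard ≤ r2 - a2 → M.Indep (X ∪ Y)) :
    ∃ B, M.IsBase B ∧ (B ∩ E1).ncard = r1 - a1 ∧ (B ∩ E2).ncard = r2 - a2 :=
  stmt_6_general M hfin E1 E2 hdisj r r1 r2 a1 a2 hr hr1 hr2 ha1r ha2r hP1 hP2
end

section
/- Let M1, M2 be matroids on disjoint ground sets E1, E2, and let A ⊆ B(M1 ⊕ M2) be the set of bases of some matroid. Then A = {X ∪ Y : X ∈ A1, Y ∈ A2} where A1 = {B ∩ E1 : B ∈ A} and A2 = {B ∩ E2 : B ∈ A}, and moreover A1 and A2 are themselves the sets of bases of matroids on E1 and E2 respectively. -/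
/-!
If every base of `N` is a base of `M₁ ⊕ M₂`, then the `E₁`-part `B ∩ E₁` of a base `B` of `N`,
being a base of `M₁`, is already a maximal `N`-independent subset of `E₁`. Hence for bases `B`, `B'`
of `N` the set `D = (B ∩ E₁) ∪ (B' ∩ E₂)` spans `N` and contains a base `B''` of `N`; the parts
`B'' ∩ E₁ ⊆ B ∩ E₁` and `B'' ∩ E₂ ⊆ B' ∩ E₂` are bases of `M₁` and `M₂`, so `B'' = D`.
The bases of `N ↾ E₁` are then exactly the sets `B ∩ E₁`.
-/

open Set

namespace Matroid

variable {α : Type*} {M₁ M₂ N : Matroid α} {h : Disjoint M₁.E M₂.E} {B B' B'' X : Set α}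

lemma isBasis_inter_left_of_isBase
    (hN : ∀ B, N.IsBase B → (M₁.disjointSum M₂ h).IsBase B) (hE : M₁.E ⊆ N.E)
    (hB : N.IsBase B) : N.IsBasis (B ∩ M₁.E) M₁.E := by
  refine (hB.indep.subset inter_subset_left).isBasis_of_maximal_subset inter_subset_right
    (fun J hJ hBJ hJE => ?_) hE
  obtain ⟨B'', hB'', hJB''⟩ := hJ.exists_isBase_superset
  have hEq : B ∩ M₁.E = B'' ∩ M₁.E :=
    (disjointSum_isBase_iff.1 (hN B hB)).1.eq_of_subset_isBase
      (disjointSum_isBase_iff.1 (hN B'' hB'')).1 (subset_inter (hBJ.trans hJB'') inter_subset_right)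
  exact hEq ▸ subset_inter hJB'' hJE

lemma inter_left_subset_of_isBase_subset
    (hN : ∀ B, N.IsBase B → (M₁.disjointSum M₂ h).IsBase B)
    (hB : N.IsBase B) (hB'' : N.IsBase B'') (hB''D : B'' ⊆ B ∩ M₁.E ∪ B' ∩ M₂.E) :
    B ∩ M₁.E ⊆ B'' := by
  have hsub : B'' ∩ M₁.E ⊆ B ∩ M₁.E := fun x hx =>
    (hB''D hx.1).elim id fun hx' => (h.ne_of_mem hx.2 hx'.2 rfl).elim
  rw [← (disjointSum_isBase_iff.1 (hN B'' hB'')).1.eq_of_subset_isBase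
    (disjointSum_isBase_iff.1 (hN B hB)).1 hsub]
  exact inter_subset_left

lemma isBase_inter_union_inter
    (hN : ∀ B, N.IsBase B → (M₁.disjointSum M₂ h).IsBase B) (hNE : N.E = M₁.E ∪ M₂.E)
    (hB : N.IsBase B) (hB' : N.IsBase B') : N.IsBase (B ∩ M₁.E ∪ B' ∩ M₂.E) := by
  have hN' : ∀ B, N.IsBase B → (M₂.disjointSum M₁ h.symm).IsBase B :=
    fun B hB => disjointSum_comm ▸ hN B hB
  have hE₁ : M₁.E ⊆ N.E := hNE ▸ subset_union_left
  have hE₂ : M₂.E ⊆ N.E := hNE ▸ subset_union_right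
  have hspan : N.Spanning (B ∩ M₁.E ∪ B' ∩ M₂.E) := by
    rw [spanning_iff_ground_subset_closure
      (union_subset (inter_subset_right.trans hE₁) (inter_subset_right.trans hE₂)), hNE]
    exact union_subset
      ((isBasis_inter_left_of_isBase hN hE₁ hB).subset_closure.trans
        (N.closure_subset_closure subset_union_left))
      ((isBasis_inter_left_of_isBase hN' hE₂ hB').subset_closure.trans
        (N.closure_subset_closure subset_union_right))
  obtain ⟨B'', hB'', hB''D⟩ := hspan.exists_isBase_subset
  have hDB'' : B ∩ M₁.E ∪ B' ∩ M₂.E ⊆ B'' := union_subset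
    (inter_left_subset_of_isBase_subset hN hB hB'' hB''D)
    (inter_left_subset_of_isBase_subset hN' hB' hB'' (union_comm (B ∩ M₁.E) _ ▸ hB''D))
  exact hB''D.antisymm hDB'' ▸ hB''

lemma isBase_restrict_iff_exists_isBase_inter
    (hN : ∀ B, N.IsBase B → (M₁.disjointSum M₂ h).IsBase B) (hE : M₁.E ⊆ N.E) :
    (N ↾ M₁.E).IsBase X ↔ ∃ B, N.IsBase B ∧ B ∩ M₁.E = X := by
  rw [isBase_restrict_iff hE]
  refine ⟨fun hX => ?_, ?_⟩
  · obtain ⟨B, hB, rfl⟩ := hX.exists_isBase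
    exact ⟨B, hB, rfl⟩
  · rintro ⟨B, hB, rfl⟩
    exact isBasis_inter_left_of_isBase hN hE hB

end Matroid

open Matroid

theorem stmt_9 {α : Type*} (M1 M2 : Matroid α) (h : Disjoint M1.E M2.E)
    (N : Matroid α) (hNE : N.E = M1.E ∪ M2.E)
    (hA : ∀ B, N.IsBase B → (M1.disjointSum M2 h).IsBase B) :
    (∀ B, N.IsBase B ↔
        ∃ X ∈ {B ∩ M1.E | B ∈ {B | N.IsBase B}}, ∃ Y ∈ {B ∩ M2.E | B ∈ {B | N.IsBase B}},
          B = X ∪ Y) ∧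
      (∃ N1 : Matroid α, N1.E = M1.E ∧
        ∀ X, N1.IsBase X ↔ X ∈ {B ∩ M1.E | B ∈ {B | N.IsBase B}}) ∧
      (∃ N2 : Matroid α, N2.E = M2.E ∧
        ∀ Y, N2.IsBase Y ↔ Y ∈ {B ∩ M2.E | B ∈ {B | N.IsBase B}}) := by
  have hA' : ∀ B, N.IsBase B → (M2.disjointSum M1 h.symm).IsBase B :=
    fun B hB => disjointSum_comm ▸ hA B hB
  refine ⟨fun B => ⟨fun hB => ⟨_, ⟨B, hB, rfl⟩, _, ⟨B, hB, rfl⟩, ?_⟩, ?_⟩,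
    ⟨N ↾ M1.E, rfl, fun X => isBase_restrict_iff_exists_isBase_inter hA (hNE ▸ subset_union_left)⟩,
    ⟨N ↾ M2.E, rfl, fun Y => isBase_restrict_iff_exists_isBase_inter hA' (hNE ▸ subset_union_right)⟩⟩
  · rw [← inter_union_distrib_left, ← hNE, inter_eq_self_of_subset_left hB.subset_ground]
  · rintro ⟨_, ⟨B₁, hB₁, rfl⟩, _, ⟨B₂, hB₂, rfl⟩, rfl⟩
    exact isBase_inter_union_inter hA hNE hB₁ hB₂
end

section
/- Let M1, M2 be matroids on disjoint ground sets and let A ⊆ B(M1 ⊕ M2) be the bases of a matroid. If X ∪ Y ∈ A and X' ∪ Y' ∈ A (with X, X' ∈ B(M1), Y, Y' ∈ B(M2)), then X ∪ Y' ∈ A. -/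
/-! Extend the part `Y'` of the base `X' ∪ Y'` of `N` to a base `B` of `N` inside `Y' ∪ (X ∪ Y)`.
Since `B` is a base of `M1 ⊕ M2`, its `M1`-part is a base of `M1` contained in `X`, hence equal
to `X`, and its `M2`-part is a base of `M2` containing `Y'`, hence equal to `Y'`. -/

open Set

namespace Matroid

variable {α : Type*} {M₁ M₂ : Matroid α} {h : Disjoint M₁.E M₂.E} {B X Y : Set α}

lemma IsBase.eq_union_of_disjointSum (hB : (M₁.disjointSum M₂ h).IsBase B) (hX : M₁.IsBase X)
    (hY : M₂.IsBase Y) (hBX : B ⊆ X ∪ M₂.E) (hYB : Y ⊆ B) : B = X ∪ Y := by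
  obtain ⟨hB₁, hB₂, hBE⟩ := disjointSum_isBase_iff.mp hB
  have hBX₁ : B ∩ M₁.E ⊆ X := fun x ⟨hxB, hx₁⟩ ↦
    (hBX hxB).resolve_right fun hx₂ ↦ disjoint_left.mp h hx₁ hx₂
  have hX_eq : B ∩ M₁.E = X := hB₁.eq_of_subset_isBase hX hBX₁
  have hY_eq : Y = B ∩ M₂.E := hY.eq_of_subset_isBase hB₂ (subset_inter hYB hY.subset_ground)
  rw [← hX_eq, hY_eq, ← inter_union_distrib_left, inter_eq_self_of_subset_left hBE]

end Matroid

theorem stmt_10_general {α : Type*} (M1 M2 : Matroid α) (h : Disjoint M1.E M2.E)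
    (N : Matroid α)
    (hA : ∀ B, N.IsBase B → (M1.disjointSum M2 h).IsBase B)
    (X X' Y Y' : Set α) (hX : M1.IsBase X)
    (hY : M2.IsBase Y) (hY' : M2.IsBase Y')
    (h1 : N.IsBase (X ∪ Y)) (h2 : N.IsBase (X' ∪ Y')) :
    N.IsBase (X ∪ Y') := by
  obtain ⟨B, hB, hY'B, hB_sub⟩ :=
    (h2.indep.subset subset_union_right).exists_isBase_subset_union_isBase h1
  have hB_sub' : B ⊆ X ∪ M2.E := hB_sub.trans <|
    union_subset (hY'.subset_ground.trans subset_union_right)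
      (union_subset_union_right X hY.subset_ground)
  rwa [← (hA B hB).eq_union_of_disjointSum hX hY' hB_sub' hY'B]

theorem stmt_10 {α : Type*} (M1 M2 : Matroid α) (h : Disjoint M1.E M2.E)
    (N : Matroid α) (hNE : N.E = M1.E ∪ M2.E)
    (hA : ∀ B, N.IsBase B → (M1.disjointSum M2 h).IsBase B)
    (X X' Y Y' : Set α) (hX : M1.IsBase X) (hX' : M1.IsBase X')
    (hY : M2.IsBase Y) (hY' : M2.IsBase Y')
    (h1 : N.IsBase (X ∪ Y)) (h2 : N.IsBase (X' ∪ Y')) :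
    N.IsBase (X ∪ Y') :=
  stmt_10_general M1 M2 h N hA X X' Y Y' hX hY hY' h1 h2
end

section
/- Let M be a binary matroid and let X, Y be bases of M at distance exactly 2 in the base graph G(M). Then there exists a unique pair of bases {U, V} such that X, U, Y, V form an empty (induced chordless) 4-cycle in G(M). -/
/-- A matroid is binary if it is representable over `GF(2)`. -/
def Matroid.IsBinary {α : Type*} (M : Matroid α) : Prop :=
  ∃ (n : ℕ) (φ : α → (Fin n → ZMod 2)), ∀ I : Set α, I ⊆ M.E →
    (M.Indep I ↔ LinearIndependent (ZMod 2) (fun x : I => φ x))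

/-- Adjacency in the matroid base graph: symmetric difference of size two. -/
def Matroid.BaseAdj {α : Type*} (M : Matroid α) (B Bᾰ : Set α) : Prop :=
  M.IsBase B ∧ M.IsBase Bᾰ ∧ (symmDiff B Bᾰ).ncard = 2

/-- An empty (chordless) square through `X` and `Y` with the other two corners `U, V`. -/
def Matroid.EmptySquare {α : Type*} (M : Matroid α) (X Y U V : Set α) : Prop :=
  M.IsBase U ∧ M.IsBase V ∧ U ≠ V ∧ M.BaseAdj X U ∧ M.BaseAdj U Y ∧
    M.BaseAdj Y V ∧ M.BaseAdj V X ∧ ¬ M.BaseAdj U V ∧ ¬ M.BaseAdj X Y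

/-!
Write `X \ Y = {x₁, x₂}` and `Y \ X = {y₁, y₂}`. Every common neighbour of `X` and `Y` in the
base graph is one of the four exchanges `X - xᵢ + yⱼ`, and two of them are adjacent exactly when
they share an `xᵢ` or a `yⱼ`; so the empty squares through `X` and `Y` are the diagonals
`{X - x₁ + y₁, X - x₂ + y₂}` and `{X - x₁ + y₂, X - x₂ + y₁}` whose corners are both bases.
Basis exchange from `X` and from `Y` makes at least one diagonal consist of bases, and if both did,
the four exchanges together with `X` and `Y` would form an octahedron, which is impossible over
`GF(2)`.
-/

open Set

namespace Set

variable {α : Type*} {A B C X Y : Set α} {a b x x' y y' : α}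

lemma Finite.eq_union_of_subset_of_encard_add_le (hA : A.Finite) (h : A ⊆ B ∪ C)
    (hle : B.encard + C.encard ≤ A.encard) : A = B ∪ C :=
  hA.eq_of_subset_of_encard_le h ((encard_union_le B C).trans hle)

lemma eq_insert_sdiff_of_sdiff_eq_singleton (hA : A \ B = {a}) (hB : B \ A = {b}) :
    B = insert b (A \ {a}) := by
  ext t
  have ha : t ∈ A ∧ t ∉ B ↔ t = a := by rw [← mem_sdiff, hA, mem_singleton_iff]
  have hb : t ∈ B ∧ t ∉ A ↔ t = b := by rw [← mem_sdiff, hB, mem_singleton_iff]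
  simp only [mem_insert_iff, mem_sdiff, mem_singleton_iff]
  tauto

lemma sdiff_insert_sdiff_singleton (hx : x ∈ X) (hy : y ∉ X) :
    X \ insert y (X \ {x}) = {x} := by
  ext t
  simp only [mem_sdiff, mem_insert_iff, mem_singleton_iff]
  constructor
  · tauto
  · rintro rfl
    exact ⟨hx, by rintro (rfl | ⟨-, h⟩) <;> contradiction⟩

lemma insert_sdiff_singleton_sdiff_of_mem (hy : y ∈ Y) :
    insert y (X \ {x}) \ Y = (X \ Y) \ {x} := by
  ext t
  simp only [mem_sdiff, mem_insert_iff, mem_singleton_iff]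
  constructor
  · rintro ⟨rfl | h, hY⟩ <;> tauto
  · tauto

lemma insert_sdiff_singleton_sdiff_insert_sdiff_singleton (hx' : x' ∈ X) (hy : y ∉ X)
    (hy' : y' ∉ X) :
    insert y (X \ {x}) \ insert y' (X \ {x'}) = ({y} \ {y'}) ∪ ({x'} \ {x}) := by
  ext t
  simp only [mem_sdiff, mem_insert_iff, mem_singleton_iff, mem_union]
  constructor
  · rintro ⟨rfl | ⟨htX, htx⟩, htne⟩ <;> tauto
  · rintro (⟨rfl, h⟩ | ⟨rfl, h⟩)
    · exact ⟨Or.inl rfl, by rintro (h' | ⟨h', -⟩) <;> contradiction⟩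
    · exact ⟨Or.inr ⟨hx', h⟩, by rintro (rfl | ⟨-, h'⟩) <;> contradiction⟩

lemma eq_and_eq_or_eq_and_eq_of_mem_pair (ha : a ∈ ({x, y} : Set α)) (hb : b ∈ ({x, y} : Set α))
    (hab : a ≠ b) : (a = x ∧ b = y) ∨ (a = y ∧ b = x) := by
  rcases ha with rfl | rfl <;> rcases hb with rfl | rfl <;> tauto

end Set

namespace Matroid

variable {α : Type*} {M : Matroid α} {B B' U X Y Z : Set α} {x y : α}

lemma BaseAdj.symm (h : M.BaseAdj B B') : M.BaseAdj B' B :=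
  ⟨h.2.1, h.1, symmDiff_comm B B' ▸ h.2.2⟩

lemma IsBase.encard_symmDiff (hB : M.IsBase B) (hB' : M.IsBase B') :
    (symmDiff B B').encard = (B \ B').encard + (B \ B').encard := by
  rw [Set.symmDiff_def, encard_union_eq disjoint_sdiff_sdiff, hB'.encard_sdiff_comm hB]

lemma baseAdj_iff_encard_sdiff :
    M.BaseAdj B B' ↔ M.IsBase B ∧ M.IsBase B' ∧ (B \ B').encard = 1 := by
  have two_mul : ∀ e : ℕ∞, e + e = 2 ↔ e = 1 := by
    intro e; induction e using ENat.recTopCoe <;> simp; norm_cast; omega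
  refine and_congr_right fun hB ↦ and_congr_right fun hB' ↦ ?_
  rw [ncard_eq_two, ← encard_eq_two, hB.encard_symmDiff hB', two_mul]

lemma IsBase.baseAdj_of_encard_sdiff_le_one (hB : M.IsBase B) (hB' : M.IsBase B') (hne : B ≠ B')
    (h : (B \ B').encard ≤ 1) : M.BaseAdj B B' := by
  refine baseAdj_iff_encard_sdiff.2 ⟨hB, hB', le_antisymm h (one_le_encard_iff_nonempty.2 ?_)⟩
  exact nonempty_iff_ne_empty.2 fun h ↦ hne (hB.eq_of_subset_isBase hB' (sdiff_eq_empty.1 h))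

lemma IsBase.baseAdj_exchange (hX : M.IsBase X) (hx : x ∈ X) (hy : y ∉ X)
    (hW : M.IsBase (insert y (X \ {x}))) : M.BaseAdj X (insert y (X \ {x})) :=
  baseAdj_iff_encard_sdiff.2 ⟨hX, hW, by rw [sdiff_insert_sdiff_singleton hx hy, encard_singleton]⟩

lemma IsBase.exchange_baseAdj (hY : M.IsBase Y) (hXY : (X \ Y).encard = 2) (hx : x ∈ X \ Y)
    (hy : y ∈ Y) (hW : M.IsBase (insert y (X \ {x}))) : M.BaseAdj (insert y (X \ {x})) Y := by
  refine baseAdj_iff_encard_sdiff.2 ⟨hW, hY, ?_⟩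
  rw [insert_sdiff_singleton_sdiff_of_mem hy, encard_sdiff_singleton_of_mem hx, hXY]
  rfl

lemma encard_sdiff_eq_two_of_baseAdj_of_baseAdj (hne : X ≠ Y) (hXY : ¬ M.BaseAdj X Y)
    (hXZ : M.BaseAdj X Z) (hZY : M.BaseAdj Z Y) : (X \ Y).encard = 2 := by
  obtain ⟨hX, hZ, hXZ⟩ := baseAdj_iff_encard_sdiff.1 hXZ
  obtain ⟨-, hY, hZY⟩ := baseAdj_iff_encard_sdiff.1 hZY
  have hle : (X \ Y).encard ≤ 2 :=
    calc (X \ Y).encard ≤ (X \ Z ∪ Z \ Y).encard := encard_le_encard (sdiff_triangle X Z Y)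
      _ ≤ (X \ Z).encard + (Z \ Y).encard := encard_union_le _ _
      _ = 2 := by rw [hXZ, hZY]; rfl
  have hlt : 1 < (X \ Y).encard :=
    lt_of_not_ge fun h ↦ hXY (hX.baseAdj_of_encard_sdiff_le_one hY hne h)
  exact le_antisymm hle (Order.add_one_le_of_lt hlt)

lemma BaseAdj.exists_eq_exchange (hXU : M.BaseAdj X U) (hUY : M.BaseAdj U Y)
    (hXY : (X \ Y).encard = 2) : ∃ x ∈ X \ Y, ∃ y ∈ Y \ X, U = insert y (X \ {x}) := by
  obtain ⟨hX, hU, hXU⟩ := baseAdj_iff_encard_sdiff.1 hXU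
  obtain ⟨-, hY, hUY⟩ := baseAdj_iff_encard_sdiff.1 hUY
  have hUX : (U \ X).encard = 1 := hX.encard_sdiff_comm hU ▸ hXU
  have hYU : (Y \ U).encard = 1 := hU.encard_sdiff_comm hY ▸ hUY
  have hYX : (Y \ X).encard = 2 := hX.encard_sdiff_comm hY ▸ hXY
  have hfin : ∀ {A : Set α}, A.encard = 2 → A.Finite := fun h ↦ finite_of_encard_eq_coe h
  have hX_eq := (hfin hXY).eq_union_of_subset_of_encard_add_le (sdiff_triangle X U Y)
    (by rw [hXU, hUY, hXY]; rfl)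
  have hY_eq := (hfin hYX).eq_union_of_subset_of_encard_add_le (sdiff_triangle Y U X)
    (by rw [hYU, hUX, hYX]; rfl)
  obtain ⟨x, hx⟩ := encard_eq_one.1 hXU
  obtain ⟨y, hy⟩ := encard_eq_one.1 hUX
  refine ⟨x, ?_, y, ?_, eq_insert_sdiff_of_sdiff_eq_singleton hx hy⟩
  · rw [hX_eq]; exact Or.inl (hx.symm.subset rfl)
  · rw [hY_eq]; exact Or.inr (hy.symm.subset rfl)

lemma IsBase.rev_exchange (hX : M.IsBase X) (hY : M.IsBase Y) (hy : y ∈ Y \ X) :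
    ∃ x ∈ X \ Y, M.IsBase (insert y (X \ {x})) := by
  have hyE : y ∈ M.E := hY.subset_ground hy.1
  obtain ⟨x, ⟨hxY, hxX⟩, hB⟩ := hX.compl_isBase_dual.exchange hY.compl_isBase_dual
    ⟨⟨hyE, hy.2⟩, fun h ↦ h.2 hy.1⟩
  have hxX : x ∈ X := by_contra fun h ↦ hxX ⟨hxY.1, h⟩
  refine ⟨x, ⟨hxX, hxY.2⟩, ?_⟩
  convert hB.compl_isBase_of_dual using 1
  ext t
  have htE : t ∈ X → t ∈ M.E := fun h ↦ hX.subset_ground h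
  by_cases hty : t = y
  · subst hty
    have hyx : t ≠ x := fun h ↦ hy.2 (h ▸ hxX)
    simp [hyE, hy.2, hyx]
  · simp only [mem_insert_iff, mem_sdiff, mem_singleton_iff, hty]
    tauto

end Matroid

section Representation

open Submodule

variable {α K V : Type*} [DivisionRing K] [AddCommGroup V] [Module K V] {φ : α → V}
  {X : Set α} {x y : α}

lemma LinearIndepOn.apply_ne_zero_of_linearCombination_eq
    (h : LinearIndepOn K φ (insert y (X \ {x}))) (hy : y ∉ X \ {x}) {c : α →₀ K}
    (hc : c ∈ Finsupp.supported K K X) (hcy : Finsupp.linearCombination K φ c = φ y) :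
    c x ≠ 0 := by
  intro hcx
  have hc' : c ∈ Finsupp.supported K K (X \ {x}) := fun t ht ↦
    ⟨hc ht, by rintro rfl; exact Finsupp.mem_support_iff.1 ht hcx⟩
  exact ((linearIndepOn_insert hy).1 h).2
    ((Finsupp.mem_span_image_iff_linearCombination K).2 ⟨c, hc', hcy⟩)

lemma Matroid.IsBase.apply_mem_span_image {M : Matroid α}
    (hφ : ∀ I ⊆ M.E, M.Indep I ↔ LinearIndepOn K φ I) (hX : M.IsBase X) (hy : y ∈ M.E) :
    φ y ∈ span K (φ '' X) := by
  by_cases hyX : y ∈ X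
  · exact subset_span (mem_image_of_mem φ hyX)
  have hdep := (hX.insert_dep ⟨hy, hyX⟩).not_indep
  rw [hφ _ (insert_subset hy hX.subset_ground), linearIndepOn_insert hyX] at hdep
  exact by_contra fun h ↦ hdep ⟨(hφ X hX.subset_ground).1 hX.indep, h⟩

end Representation

/-- Over `GF(2)` the two exchanges `X - xᵢ + y` force `y ≡ x₁ + x₂` modulo the span of `X ∩ Y`, so
two such `y` would be dependent modulo `X ∩ Y`. -/
theorem Matroid.IsBinary.not_indep_four_exchanges {α : Type*} {M : Matroid α} (hM : M.IsBinary)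
    {X Y : Set α} {x₁ x₂ y₁ y₂ : α} (hX : M.IsBase X) (hY : M.Indep Y) (hXY : X \ Y = {x₁, x₂})
    (hy₁ : y₁ ∈ Y \ X) (hy₂ : y₂ ∈ Y \ X) (hy : y₁ ≠ y₂) :
    ¬ (M.Indep (insert y₁ (X \ {x₁})) ∧ M.Indep (insert y₁ (X \ {x₂})) ∧
      M.Indep (insert y₂ (X \ {x₁})) ∧ M.Indep (insert y₂ (X \ {x₂}))) := by
  rintro ⟨h₁₁, h₁₂, h₂₁, h₂₂⟩
  obtain ⟨n, φ, hφ⟩ := hM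
  have hφ' : ∀ I ⊆ M.E, M.Indep I ↔ LinearIndepOn (ZMod 2) φ I := hφ
  have coeffs : ∀ y ∈ Y \ X, M.Indep (insert y (X \ {x₁})) → M.Indep (insert y (X \ {x₂})) →
      ∃ c ∈ Finsupp.supported (ZMod 2) (ZMod 2) X,
        Finsupp.linearCombination (ZMod 2) φ c = φ y ∧ c x₁ = 1 ∧ c x₂ = 1 := by
    intro y hy h₁ h₂
    have hyE : y ∈ M.E := hY.subset_ground hy.1
    obtain ⟨c, hc, hcy⟩ := (Finsupp.mem_span_image_iff_linearCombination (ZMod 2)).1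
      (hX.apply_mem_span_image hφ' hyE)
    have one_of_ne_zero : ∀ a : ZMod 2, a ≠ 0 → a = 1 := by decide
    have hy' : ∀ x, y ∉ X \ {x} := fun _ h ↦ hy.2 h.1
    refine ⟨c, hc, hcy, one_of_ne_zero _ ?_, one_of_ne_zero _ ?_⟩
    · exact ((hφ' _ (h₁.subset_ground)).1 h₁).apply_ne_zero_of_linearCombination_eq (hy' _) hc hcy
    · exact ((hφ' _ (h₂.subset_ground)).1 h₂).apply_ne_zero_of_linearCombination_eq (hy' _) hc hcy
  obtain ⟨c₁, hc₁, hcy₁, hc₁₁, hc₁₂⟩ := coeffs y₁ hy₁ h₁₁ h₁₂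
  obtain ⟨c₂, hc₂, hcy₂, hc₂₁, hc₂₂⟩ := coeffs y₂ hy₂ h₂₁ h₂₂
  have hsupp : c₁ - c₂ ∈ Finsupp.supported (ZMod 2) (ZMod 2) (Y \ {y₁}) := by
    intro t ht
    have htX : t ∈ X := sub_mem hc₁ hc₂ ht
    have htY : t ∈ Y := by
      by_contra htY
      have ht' : t ∈ X \ Y := ⟨htX, htY⟩
      rw [hXY] at ht'
      apply Finsupp.mem_support_iff.1 ht
      rcases ht' with rfl | rfl
      · simp [hc₁₁, hc₂₁]
      · simp [hc₁₂, hc₂₂]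
    exact ⟨htY, fun h ↦ hy₁.2 (h ▸ htX)⟩
  have hmem : φ y₁ ∈ Submodule.span (ZMod 2) (φ '' (Y \ {y₁})) := by
    have : φ y₁ = φ y₂ + Finsupp.linearCombination (ZMod 2) φ (c₁ - c₂) := by
      rw [map_sub, hcy₁, hcy₂]; abel
    rw [this]
    exact add_mem (Submodule.subset_span ⟨y₂, ⟨hy₂.1, hy.symm⟩, rfl⟩)
      ((Finsupp.mem_span_image_iff_linearCombination _).2 ⟨_, hsupp, rfl⟩)
  exact linearIndepOn_iff_notMem_span.1 ((hφ' Y hY.subset_ground).1 hY) y₁ hy₁.1 hmem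

namespace Matroid

variable {α : Type*} {M : Matroid α} {B B' U V X Y : Set α} {x x' y y' x₁ x₂ y₁ y₂ : α}

lemma not_baseAdj_of_encard_sdiff_eq_two (h : (B \ B').encard = 2) : ¬ M.BaseAdj B B' :=
  fun hadj ↦ by simpa [h] using (baseAdj_iff_encard_sdiff.1 hadj).2.2

lemma baseAdj_exchange_of_eq_or_eq (hx' : x' ∈ X) (hy : y ∉ X) (hy' : y' ∉ X)
    (hU : M.IsBase (insert y (X \ {x}))) (hV : M.IsBase (insert y' (X \ {x'})))
    (hne : insert y (X \ {x}) ≠ insert y' (X \ {x'})) (h : x = x' ∨ y = y') :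
    M.BaseAdj (insert y (X \ {x})) (insert y' (X \ {x'})) := by
  refine hU.baseAdj_of_encard_sdiff_le_one hV hne ?_
  rw [insert_sdiff_singleton_sdiff_insert_sdiff_singleton hx' hy hy']
  rcases h with rfl | rfl
  · simpa using (encard_le_encard sdiff_subset).trans (encard_singleton y).le
  · simpa using (encard_le_encard sdiff_subset).trans (encard_singleton x').le

lemma IsBase.isBase_exchange_diagonal (hX : M.IsBase X) (hY : M.IsBase Y)
    (hXY : X \ Y = {x₁, x₂}) (hYX : Y \ X = {y₁, y₂}) :
    (M.IsBase (insert y₁ (X \ {x₁})) ∧ M.IsBase (insert y₂ (X \ {x₂}))) ∨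
      (M.IsBase (insert y₂ (X \ {x₁})) ∧ M.IsBase (insert y₁ (X \ {x₂}))) := by
  have row : ∀ x ∈ X \ Y, M.IsBase (insert y₁ (X \ {x})) ∨ M.IsBase (insert y₂ (X \ {x})) := by
    intro x hx
    obtain ⟨y, hy, hB⟩ := hX.exchange hY hx
    rw [hYX] at hy
    rcases hy with rfl | rfl
    exacts [Or.inl hB, Or.inr hB]
  have col : ∀ y ∈ Y \ X, M.IsBase (insert y (X \ {x₁})) ∨ M.IsBase (insert y (X \ {x₂})) := by
    intro y hy
    obtain ⟨x, hx, hB⟩ := hX.rev_exchange hY hy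
    rw [hXY] at hx
    rcases hx with rfl | rfl
    exacts [Or.inl hB, Or.inr hB]
  have := row x₁ (hXY ▸ mem_insert x₁ _)
  have := row x₂ (hXY ▸ mem_insert_of_mem x₁ rfl)
  have := col y₁ (hYX ▸ mem_insert y₁ _)
  have := col y₂ (hYX ▸ mem_insert_of_mem y₁ rfl)
  tauto

section Square

variable (hX : M.IsBase X) (hY : M.IsBase Y) (hXY : X \ Y = {x₁, x₂}) (hYX : Y \ X = {y₁, y₂})
  (hx : x₁ ≠ x₂) (hy : y₁ ≠ y₂)
include hX hY hXY hYX hx hy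

lemma emptySquare_exchange (h₁₁ : M.IsBase (insert y₁ (X \ {x₁})))
    (h₂₂ : M.IsBase (insert y₂ (X \ {x₂}))) :
    M.EmptySquare X Y (insert y₁ (X \ {x₁})) (insert y₂ (X \ {x₂})) := by
  have hx₁ : x₁ ∈ X \ Y := hXY ▸ mem_insert x₁ _
  have hx₂ : x₂ ∈ X \ Y := hXY ▸ mem_insert_of_mem x₁ rfl
  have hy₁ : y₁ ∈ Y \ X := hYX ▸ mem_insert y₁ _
  have hy₂ : y₂ ∈ Y \ X := hYX ▸ mem_insert_of_mem y₁ rfl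
  have hXY₂ : (X \ Y).encard = 2 := hXY ▸ encard_pair hx
  have hdiag : (insert y₁ (X \ {x₁}) \ insert y₂ (X \ {x₂})).encard = 2 := by
    rw [insert_sdiff_singleton_sdiff_insert_sdiff_singleton hx₂.1 hy₁.2 hy₂.2,
      sdiff_singleton_eq_self (mem_singleton_iff.not.2 hy.symm),
      sdiff_singleton_eq_self (mem_singleton_iff.not.2 hx), singleton_union]
    exact encard_pair fun h ↦ hy₁.2 (h ▸ hx₂.1)
  refine ⟨h₁₁, h₂₂, fun h ↦ ?_, hX.baseAdj_exchange hx₁.1 hy₁.2 h₁₁,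
    hY.exchange_baseAdj hXY₂ hx₁ hy₁.1 h₁₁, (hY.exchange_baseAdj hXY₂ hx₂ hy₂.1 h₂₂).symm,
    (hX.baseAdj_exchange hx₂.1 hy₂.2 h₂₂).symm, not_baseAdj_of_encard_sdiff_eq_two hdiag,
    not_baseAdj_of_encard_sdiff_eq_two hXY₂⟩
  simp [h] at hdiag

lemma IsBinary.eq_pair_of_emptySquare (hM : M.IsBinary) (h₁₁ : M.IsBase (insert y₁ (X \ {x₁})))
    (h₂₂ : M.IsBase (insert y₂ (X \ {x₂}))) (hUV : M.EmptySquare X Y U V) :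
    ({U, V} : Set (Set α)) = {insert y₁ (X \ {x₁}), insert y₂ (X \ {x₂})} := by
  obtain ⟨hU, hV, hne, hXU, hUY, hYV, hVX, hnUV, -⟩ := hUV
  have hXY₂ : (X \ Y).encard = 2 := hXY ▸ encard_pair hx
  obtain ⟨a, ha, b, hb, rfl⟩ := hXU.exists_eq_exchange hUY hXY₂
  obtain ⟨a', ha', b', hb', rfl⟩ := hVX.symm.exists_eq_exchange hYV.symm hXY₂
  have adj := baseAdj_exchange_of_eq_or_eq ha'.1 hb.2 hb'.2 hU hV hne
  have haa' : a ≠ a' := fun h ↦ hnUV (adj (Or.inl h))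
  have hbb' : b ≠ b' := fun h ↦ hnUV (adj (Or.inr h))
  have hy₁ : y₁ ∈ Y \ X := hYX ▸ mem_insert y₁ _
  have hy₂ : y₂ ∈ Y \ X := hYX ▸ mem_insert_of_mem y₁ rfl
  have octahedron := hM.not_indep_four_exchanges hX hY.indep hXY hy₁ hy₂ hy
  rw [hXY] at ha ha'
  rw [hYX] at hb hb'
  obtain ⟨rfl, rfl⟩ | ⟨rfl, rfl⟩ := eq_and_eq_or_eq_and_eq_of_mem_pair ha ha' haa' <;>
    obtain ⟨rfl, rfl⟩ | ⟨rfl, rfl⟩ := eq_and_eq_or_eq_and_eq_of_mem_pair hb hb' hbb'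
  · rfl
  · exact (octahedron ⟨h₁₁.indep, hV.indep, hU.indep, h₂₂.indep⟩).elim
  · exact (octahedron ⟨h₁₁.indep, hU.indep, hV.indep, h₂₂.indep⟩).elim
  · exact pair_comm _ _

end Square

end Matroid

theorem stmt_11_general {α : Type*} (M : Matroid α) (hbin : M.IsBinary)
    (X Y : Set α) (hX : M.IsBase X) (hY : M.IsBase Y)
    (hdist : X ≠ Y ∧ ¬ M.BaseAdj X Y ∧ ∃ Z, M.BaseAdj X Z ∧ M.BaseAdj Z Y) :
    ∃ U V : Set α, M.EmptySquare X Y U V ∧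
      ∀ U' V' : Set α, M.EmptySquare X Y U' V' → ({U', V'} : Set (Set α)) = {U, V} := by
  obtain ⟨hne, hnadj, Z, hXZ, hZY⟩ := hdist
  have hXY₂ := Matroid.encard_sdiff_eq_two_of_baseAdj_of_baseAdj hne hnadj hXZ hZY
  obtain ⟨x₁, x₂, hx, hXY⟩ := Set.encard_eq_two.1 hXY₂
  obtain ⟨y₁, y₂, hy, hYX⟩ := Set.encard_eq_two.1 (hX.encard_sdiff_comm hY ▸ hXY₂)
  obtain ⟨h₁₁, h₂₂⟩ | ⟨h₁₂, h₂₁⟩ := hX.isBase_exchange_diagonal hY hXY hYX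
  · exact ⟨_, _, Matroid.emptySquare_exchange hX hY hXY hYX hx hy h₁₁ h₂₂,
      fun _ _ ↦ hbin.eq_pair_of_emptySquare hX hY hXY hYX hx hy h₁₁ h₂₂⟩
  · have hYX' : Y \ X = {y₂, y₁} := hYX.trans (Set.pair_comm _ _)
    exact ⟨_, _, Matroid.emptySquare_exchange hX hY hXY hYX' hx hy.symm h₁₂ h₂₁,
      fun _ _ ↦ hbin.eq_pair_of_emptySquare hX hY hXY hYX' hx hy.symm h₁₂ h₂₁⟩

theorem stmt_11 {α : Type*} (M : Matroid α) (hfin : M.E.Finite) (hbin : M.IsBinary)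
    (X Y : Set α) (hX : M.IsBase X) (hY : M.IsBase Y)
    (hdist : X ≠ Y ∧ ¬ M.BaseAdj X Y ∧ ∃ Z, M.BaseAdj X Z ∧ M.BaseAdj Z Y) :
    ∃ U V : Set α, M.EmptySquare X Y U V ∧
      ∀ U' V' : Set α, M.EmptySquare X Y U' V' → ({U', V'} : Set (Set α)) = {U, V} :=
  stmt_11_general M hbin X Y hX hY hdist
end

section
/- Let M be a binary matroid and let B1 ⊆ B(M) be the set of bases of a matroid M1. If some base X ∈ B1 has all of its neighbors in G(M) (all bases at symmetric-difference distance two from X) also in B1, then B1 = B(M). -/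
/-!
Call a base good if it is a base of `M₁` and so are all its neighbours in the base graph of `M`.
As the base graph is connected, it suffices that goodness passes from a good base `Y` to every
neighbour `Z`. For a neighbour `W` of `Z` the only nontrivial case is a square
`Y = A + b + x`, `Z = A + x + c`, `W = A + c + d`. Modulo the span of `A` the representation has
rank two over `GF(2)`, so the images of `b, x, c, d` take at most three nonzero values; in each
possible configuration two of the bases of `M₁` adjacent to `Y` admit only one exchange in `M₁`
that is a base of `M`, and that exchange is `W`.
-/

open Set Submodule

theorem Set.symmDiff_insert_sdiff_singleton {α : Type*} {B : Set α} {e f : α}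
    (he : e ∈ B) (hf : f ∉ B) : symmDiff B (insert f (B \ {e})) = {e, f} := by
  ext a
  simp only [Set.mem_symmDiff, mem_insert_iff, mem_sdiff, mem_singleton_iff]
  grind

theorem Set.ncard_symmDiff_insert_sdiff_singleton {α : Type*} {B : Set α} {e f : α}
    (he : e ∈ B) (hf : f ∉ B) : (symmDiff B (insert f (B \ {e}))).ncard = 2 := by
  rw [symmDiff_insert_sdiff_singleton he hf, ncard_pair (ne_of_mem_of_not_mem he hf)]

section ZModTwo

variable {V : Type*} [AddCommGroup V] [Module (ZMod 2) V]

theorem Submodule.mem_span_insert_iff_zmod_two {s : Set V} {u v : V} :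
    v ∈ span (ZMod 2) (insert u s) ↔ v ∈ span (ZMod 2) s ∨ v + u ∈ span (ZMod 2) s := by
  rw [mem_span_insert']
  constructor
  · rintro ⟨a, ha⟩
    obtain rfl | rfl : a = 0 ∨ a = 1 := by clear ha; decide +revert
    · left; simpa using ha
    · right; simpa using ha
  · rintro (h | h)
    · exact ⟨0, by simpa using h⟩
    · exact ⟨1, by simpa using h⟩

theorem Submodule.add_mem_iff_mk_eq_mk {S : Submodule (ZMod 2) V} {u v : V} :
    u + v ∈ S ↔ (Quotient.mk u : V ⧸ S) = Quotient.mk v := by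
  rw [Quotient.eq, ZModModule.sub_eq_add]

end ZModTwo

namespace Matroid

variable {α : Type*} {M : Matroid α}

theorem IsBase.exists_eq_exchange_of_ncard_symmDiff [M.RankFinite] {B B' : Set α}
    (hB : M.IsBase B) (hB' : M.IsBase B') (h : (symmDiff B B').ncard = 2) :
    ∃ e ∈ B \ B', ∃ f ∈ B' \ B, B' = insert f (B \ {e}) := by
  rw [Set.symmDiff_def, ncard_union_eq disjoint_sdiff_sdiff hB.finite.sdiff hB'.finite.sdiff,
    ← hB.ncard_sdiff_comm hB'] at h
  obtain ⟨e, he⟩ := ncard_eq_one.mp (show (B \ B').ncard = 1 by omega)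
  obtain ⟨f, hf, hB'f⟩ := hB.eq_exchange_of_sdiff_eq_singleton hB' he
  have he' : e ∈ B \ B' := he ▸ mem_singleton e
  exact ⟨e, he', f, hf, insert_sdiff_singleton_comm (ne_of_mem_of_not_mem he'.1 hf.2).symm B ▸ hB'f⟩

theorem IsBase.induction_on_adjacent [M.RankFinite] {P : Set α → Prop} {X : Set α}
    (hX : M.IsBase X) (hPX : P X)
    (hP : ∀ B B', M.IsBase B → M.IsBase B' → (symmDiff B B').ncard = 2 → P B → P B')
    {B : Set α} (hB : M.IsBase B) : P B := by
  induction hn : (B \ X).ncard using Nat.strong_induction_on generalizing B with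
  | _ n ih =>
  obtain hBX | ⟨e, he⟩ := (B \ X).eq_empty_or_nonempty
  · rwa [hB.eq_of_subset_isBase hX (sdiff_eq_empty.mp hBX)]
  obtain ⟨f, ⟨hfX, hfB⟩, hB'⟩ := hB.exchange hX he
  have hlt : (insert f (B \ {e}) \ X).ncard < n := by
    rw [← hn, insert_sdiff_of_mem _ hfX, sdiff_right_comm]
    exact ncard_lt_ncard (sdiff_singleton_ssubset.mpr he) hB.finite.sdiff
  refine hP _ B hB' hB ?_ (ih _ hlt hB' rfl)
  rw [symmDiff_comm]
  exact ncard_symmDiff_insert_sdiff_singleton he.1 hfB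

theorem IsBase.exchange_insert_insert {A : Set α} {u v s t : α}
    (hK : M.IsBase (insert u (insert v A))) (hL : M.IsBase (insert s (insert t A)))
    (huL : u ∉ insert s (insert t A)) (huvA : u ∉ insert v A) :
    M.IsBase (insert s (insert v A)) ∨ M.IsBase (insert t (insert v A)) := by
  obtain ⟨y, ⟨hyL, hyK⟩, hy⟩ := hK.exchange_mem hL (mem_insert u _) huL
  rw [insert_sdiff_self_of_notMem huvA] at hy
  obtain rfl | rfl | hyA := hyL
  · exact .inl hy
  · exact .inr hy
  · exact absurd (mem_insert_of_mem _ (mem_insert_of_mem _ hyA)) hyK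

section Representation

variable {V : Type*} [AddCommGroup V]

def IsRepresentation (K : Type*) [Field K] [Module K V] (M : Matroid α) (φ : α → V) : Prop :=
  ∀ I ⊆ M.E, M.Indep I ↔ LinearIndepOn K φ I

theorem IsRepresentation.indep_insert_iff {K : Type*} [Field K] [Module K V] {φ : α → V}
    (hφ : M.IsRepresentation K φ) {I : Set α} {e : α} (hI : M.Indep I) (he : e ∈ M.E)
    (heI : e ∉ I) :
    M.Indep (insert e I) ↔ φ e ∉ span K (φ '' I) := by
  rw [hφ _ (insert_subset he hI.subset_ground), linearIndepOn_insert heI,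
    and_iff_right ((hφ I hI.subset_ground).mp hI)]

end Representation

section Binary

variable {V : Type*} [AddCommGroup V] [Module (ZMod 2) V] {φ : α → V} {A : Set α}
  {b c d u v w x : α}

/-- For independent `A` this represents the contraction `M ／ A`. -/
def modSpan (φ : α → V) (A : Set α) (e : α) : V ⧸ span (ZMod 2) (φ '' A) :=
  Submodule.Quotient.mk (φ e)

theorem IsRepresentation.indep_insert_insert_iff (hφ : M.IsRepresentation (ZMod 2) φ)
    (hvA : M.Indep (insert v A)) (hu : u ∈ M.E) (huvA : u ∉ insert v A) :
    M.Indep (insert u (insert v A)) ↔ modSpan φ A u ≠ 0 ∧ modSpan φ A u ≠ modSpan φ A v := by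
  rw [hφ.indep_insert_iff hvA hu huvA, image_insert_eq, mem_span_insert_iff_zmod_two,
    add_mem_iff_mk_eq_mk, ← Submodule.Quotient.mk_eq_zero, not_or]
  rfl

theorem IsRepresentation.isBase_insert_insert_iff (hφ : M.IsRepresentation (ZMod 2) φ)
    (hB : M.IsBase (insert w (insert v A))) (hw : w ∉ insert v A) (hu : u ∈ M.E)
    (huvA : u ∉ insert v A) :
    M.IsBase (insert u (insert v A)) ↔ modSpan φ A u ≠ 0 ∧ modSpan φ A u ≠ modSpan φ A v := by
  rw [← hφ.indep_insert_insert_iff (hB.indep.subset (subset_insert _ _)) hu huvA]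
  exact ⟨IsBase.indep, insert_isBase_of_insert_indep hw huvA hB⟩

theorem IsRepresentation.isBase_insert_insert_iff_of_imp {M₁ : Matroid α}
    (hφ : M.IsRepresentation (ZMod 2) φ) (hsub : ∀ B, M₁.IsBase B → M.IsBase B)
    (hB : M.IsBase (insert w (insert v A))) (hw : w ∉ insert v A) (hu : u ∈ M.E)
    (huvA : u ∉ insert v A) (hu0 : modSpan φ A u ≠ 0)
    (hM₁ : M.IsBase (insert u (insert v A)) → M₁.IsBase (insert u (insert v A))) :
    M₁.IsBase (insert u (insert v A)) ↔ modSpan φ A u ≠ modSpan φ A v := by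
  have hbase := hφ.isBase_insert_insert_iff hB hw hu huvA
  exact ⟨fun h ↦ (hbase.mp (hsub _ h)).2, fun h ↦ hM₁ (hbase.mpr ⟨hu0, h⟩)⟩

theorem IsRepresentation.modSpan_eq_of_isBase (hφ : M.IsRepresentation (ZMod 2) φ)
    (hY : M.IsBase (insert b (insert x A))) (hc : c ∈ M.E) (hcY : c ∉ insert b (insert x A)) :
    modSpan φ A c = 0 ∨ modSpan φ A c = modSpan φ A b ∨ modSpan φ A c = modSpan φ A x ∨
      modSpan φ A c = modSpan φ A b + modSpan φ A x := by
  have hspan : φ c ∈ span (ZMod 2) (φ '' insert b (insert x A)) := by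
    by_contra h
    exact (hY.insert_dep ⟨hc, hcY⟩).not_indep ((hφ.indep_insert_iff hY.indep hc hcY).mpr h)
  rw [image_insert_eq, image_insert_eq, mem_span_insert_iff_zmod_two,
    mem_span_insert_iff_zmod_two, mem_span_insert_iff_zmod_two, add_assoc,
    add_mem_iff_mk_eq_mk, add_mem_iff_mk_eq_mk, add_mem_iff_mk_eq_mk,
    ← Submodule.Quotient.mk_eq_zero, Submodule.Quotient.mk_add] at hspan
  unfold modSpan
  tauto

theorem IsRepresentation.isBase_of_square {M₁ : Matroid α} (hφ : M.IsRepresentation (ZMod 2) φ)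
    (hsub : ∀ B, M₁.IsBase B → M.IsBase B) (hbA : b ∉ A) (hxA : x ∉ A) (hcA : c ∉ A)
    (hdA : d ∉ A) (hbx : b ≠ x) (hbc : b ≠ c) (hbd : b ≠ d) (hxc : x ≠ c) (hxd : x ≠ d)
    (hcd : c ≠ d) (hY : M.IsBase (insert b (insert x A))) (hZ : M.IsBase (insert c (insert x A)))
    (hW : M.IsBase (insert d (insert c A)))
    (hnbr : ∀ u ∈ ({c, d} : Set α), ∀ v ∈ ({b, x} : Set α),
      M.IsBase (insert u (insert v A)) → M₁.IsBase (insert u (insert v A))) :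
    M₁.IsBase (insert d (insert c A)) := by
  set q := modSpan φ A
  have hcE : c ∈ M.E := hZ.subset_ground (mem_insert _ _)
  have hdE : d ∈ M.E := hW.subset_ground (mem_insert _ _)
  have hqbx : q b ≠ q x := ((hφ.indep_insert_insert_iff (hY.indep.subset (subset_insert _ _))
    (hY.subset_ground (mem_insert _ _)) (by simp [hbx, hbA])).mp hY.indep).2
  obtain ⟨hqc0, hqcx⟩ := (hφ.indep_insert_insert_iff (hZ.indep.subset (subset_insert _ _)) hcE
    (by simp [hxc.symm, hcA])).mp hZ.indep
  obtain ⟨hqd0, hqdc⟩ := (hφ.indep_insert_insert_iff (hW.indep.subset (subset_insert _ _)) hdE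
    (by simp [hcd.symm, hdA])).mp hW.indep
  have hcorner : ∀ u ∈ ({c, d} : Set α), ∀ v ∈ ({b, x} : Set α),
      M₁.IsBase (insert u (insert v A)) ↔ q u ≠ q v := by
    intro u hu v hv
    obtain ⟨w, hw, hYw⟩ : ∃ w ∉ insert v A, M.IsBase (insert w (insert v A)) := by
      rcases hv with rfl | rfl
      · exact ⟨x, by simp [hbx.symm, hxA], insert_comm x v A ▸ hY⟩
      · exact ⟨b, by simp [hbx, hbA], hY⟩
    have huvA : u ∉ insert v A := by
      rcases hu with rfl | rfl <;> rcases hv with rfl | rfl <;> simp [*, Ne.symm]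
    refine hφ.isBase_insert_insert_iff_of_imp hsub hYw hw ?_ huvA ?_ (hnbr u hu v hv) <;>
      rcases hu with rfl | rfl <;> assumption
  have hZ₁ := (hcorner c (by simp) x (by simp)).mpr hqcx
  by_cases hqbc : q c = q b
  · have hbd₁ := (hcorner d (by simp) b (by simp)).mpr (hqbc ▸ hqdc)
    refine ((insert_comm c x A ▸ hZ₁).exchange_insert_insert (insert_comm d b A ▸ hbd₁)
      (by simp [*, Ne.symm]) (by simp [*])).resolve_left fun h ↦ ?_
    exact (hcorner c (by simp) b (by simp)).mp (insert_comm b c A ▸ h) hqbc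
  have hbc₁ := (hcorner c (by simp) b (by simp)).mpr hqbc
  rw [insert_comm]
  by_cases hqdx : q d = q x
  · have hbd₁ := (hcorner d (by simp) b (by simp)).mpr (hqdx ▸ hqbx.symm)
    refine ((insert_comm d b A ▸ hbd₁).exchange_insert_insert (insert_comm c x A ▸ hZ₁)
      (by simp [*]) (by simp [*])).resolve_left fun h ↦ ?_
    exact (hcorner d (by simp) x (by simp)).mp (insert_comm x d A ▸ h) hqdx
  have hxd₁ := (hcorner d (by simp) x (by simp)).mpr hqdx
  -- `q b`, `q x` and `q c` are the three nonzero vectors of a rank-two space over `GF(2)`.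
  have hqc : q c = q b + q x := by
    have := hφ.modSpan_eq_of_isBase hY hcE (by simp [*, Ne.symm])
    tauto
  have hqdb : q d = q b := by
    have := hφ.modSpan_eq_of_isBase hY hdE (by simp [*, Ne.symm])
    rw [← hqc] at this
    tauto
  refine ((insert_comm d x A ▸ hxd₁).exchange_insert_insert (insert_comm c b A ▸ hbc₁)
    (by simp [*, hbx.symm]) (by simp [*])).resolve_left fun h ↦ ?_
  exact (hcorner d (by simp) b (by simp)).mp (insert_comm b d A ▸ h) hqdb

theorem IsRepresentation.forall_adjacent_isBase_of_adjacent [M.RankFinite] {M₁ : Matroid α}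
    (hφ : M.IsRepresentation (ZMod 2) φ) (hsub : ∀ B, M₁.IsBase B → M.IsBase B) {Y Z : Set α}
    (hY : M.IsBase Y) (hY₁ : M₁.IsBase Y)
    (hYnbr : ∀ W, M.IsBase W → (symmDiff Y W).ncard = 2 → M₁.IsBase W)
    (hZ : M.IsBase Z) (hYZ : (symmDiff Y Z).ncard = 2) :
    ∀ W, M.IsBase W → (symmDiff Z W).ncard = 2 → M₁.IsBase W := by
  intro W hW hZW
  obtain ⟨b, ⟨hbY, -⟩, c, ⟨-, hcY⟩, rfl⟩ := hY.exists_eq_exchange_of_ncard_symmDiff hZ hYZ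
  obtain ⟨x, ⟨hxZ, -⟩, d, ⟨-, hdZ⟩, rfl⟩ := hZ.exists_eq_exchange_of_ncard_symmDiff hW hZW
  have hadj : ∀ v ∈ Y, ∀ u ∉ Y, M.IsBase (insert u (Y \ {v})) → M₁.IsBase (insert u (Y \ {v})) :=
    fun v hv u hu h ↦ hYnbr _ h (ncard_symmDiff_insert_sdiff_singleton hv hu)
  obtain rfl | hxc := eq_or_ne x c
  · rw [insert_sdiff_self_of_notMem (fun h ↦ hcY h.1)] at hW ⊢
    obtain rfl | hdb := eq_or_ne d b
    · rwa [insert_sdiff_singleton, insert_eq_of_mem hbY]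
    · exact hadj b hbY d (fun h ↦ hdZ (mem_insert_of_mem _ ⟨h, hdb⟩)) hW
  have hxY : x ∈ Y \ {b} := (mem_insert_iff.mp hxZ).resolve_left hxc
  set A := (Y \ {b}) \ {x}
  have hYb : Y \ {b} = insert x A := (insert_sdiff_self_of_mem hxY).symm
  have hYx : Y \ {x} = insert b A := by
    ext; simp only [A, mem_sdiff, mem_insert_iff, mem_singleton_iff]; grind
  have hZx : insert c (Y \ {b}) \ {x} = insert c A := by
    rw [insert_sdiff_of_notMem _ (by simpa using hxc.symm)]
  rw [hZx] at hW ⊢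
  obtain rfl | hdb := eq_or_ne d b
  · rw [insert_comm, ← hYx] at hW ⊢
    exact hadj x hxY.1 c hcY hW
  have hdY : d ∉ Y := fun h ↦ hdZ (mem_insert_of_mem _ ⟨h, hdb⟩)
  rw [hYb] at hZ hdZ
  have hY' : M.IsBase (insert b (insert x A)) := by rwa [← hYb, insert_sdiff_self_of_mem hbY]
  refine hφ.isBase_of_square hsub (by simp [A]) (by simp [A]) (fun h ↦ hcY h.1.1)
    (fun h ↦ hdY h.1.1) (Ne.symm hxY.2) (ne_of_mem_of_not_mem hbY hcY) hdb.symm hxc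
    (ne_of_mem_of_not_mem (by simp) hdZ) (ne_of_mem_of_not_mem (by simp) hdZ) hY' hZ hW ?_
  rintro u hu v (rfl | rfl) hB
  · rw [← hYx] at hB ⊢
    exact hadj x hxY.1 u (by rcases hu with rfl | rfl <;> assumption) hB
  · rw [← hYb] at hB ⊢
    exact hadj b hbY u (by rcases hu with rfl | rfl <;> assumption) hB

end Binary

end Matroid

theorem stmt_12_general {α : Type*} (M : Matroid α) (hfin : M.E.Finite) (hbin : M.IsBinary)
    (M1 : Matroid α) (hsub : ∀ B, M1.IsBase B → M.IsBase B)
    (X : Set α) (hX : M1.IsBase X)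
    (hnbr : ∀ Y, M.IsBase Y → (symmDiff X Y).ncard = 2 → M1.IsBase Y) :
    ∀ B, M.IsBase B ↔ M1.IsBase B := by
  obtain ⟨n, φ, hφ⟩ : ∃ n, ∃ φ : α → (Fin n → ZMod 2), M.IsRepresentation (ZMod 2) φ := hbin
  have : M.Finite := ⟨hfin⟩
  refine fun B ↦ ⟨fun hB ↦ ?_, hsub B⟩
  refine ((hsub X hX).induction_on_adjacent (P := fun B ↦
    M1.IsBase B ∧ ∀ W, M.IsBase W → (symmDiff B W).ncard = 2 → M1.IsBase W) ⟨hX, hnbr⟩ ?_ hB).1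
  rintro Y Z hY hZ hYZ ⟨hY₁, hYnbr⟩
  exact ⟨hYnbr Z hZ hYZ, hφ.forall_adjacent_isBase_of_adjacent hsub hY hY₁ hYnbr hZ hYZ⟩

theorem stmt_12 {α : Type*} (M : Matroid α) (hfin : M.E.Finite) (hbin : M.IsBinary)
    (M1 : Matroid α) (hE : M1.E = M.E) (hsub : ∀ B, M1.IsBase B → M.IsBase B)
    (X : Set α) (hX : M1.IsBase X)
    (hnbr : ∀ Y, M.IsBase Y → (symmDiff X Y).ncard = 2 → M1.IsBase Y) :
    ∀ B, M.IsBase B ↔ M1.IsBase B :=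
  stmt_12_general M hfin hbin M1 hsub X hX hnbr
end

section
/- If M is a binary matroid then its matroid base polytope P(M) admits no nontrivial hyperplane split: there do not exist matroids M1, M2 with B(M1), B(M2) ⊊ B(M), B(M1) ∪ B(M2) = B(M), such that P(M) = P(M1) ∪ P(M2) with P(M1) ∩ P(M2) a common face of both. -/
/-- The matroid base polytope: the convex hull of the indicator vectors of the bases. -/
noncomputable def basePolytope {α : Type*} (M : Matroid α) : Set (α → ℝ) :=
  convexHull ℝ ((fun B : Set α => B.indicator fun _ => (1 : ℝ)) '' {B | M.IsBase B})

/-!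
The bases of `M` are the vertices of `P(M)`, adjacent when they differ by a single exchange.
Suppose `P(M) = P(M₁) ∪ P(M₂)` and let `X` be a base of `M₁` but not of `M₂`. For a neighbour `Y`
of `X`, the midpoint of `1_X` and `1_Y` lies in `P(M)`; with `r` the rank of `M`, the functional
`∑_{e ∈ Y} z e` equals `r - 1/2` there but is at most `r - 1` on `P(M₁)` unless `Y` is a base of
`M₁`, and symmetrically with `X` and `P(M₂)`. So `X` and all its neighbours are bases of `M₁`.

For binary `M` this property passes from a base `Z` to its neighbours, i.e. every base `Y` with
`Z \ Y = {a, b}`, `Y \ Z = {c, d}` is a base of `M₁`: the four single exchanges between `Z` and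
`Y` cannot all give bases over `GF(2)`, and a missing one forces two others, which are neighbours
of `Z` and hence bases of `M₁`, from which `Y` is one exchange inside `M₁` away. As the base
exchange graph is connected, every base of `M` is a base of `M₁`, contradicting `B(M₁) ⊊ B(M)`.
-/

open Set Submodule

theorem Submodule.sub_sub_mem_span_of_mem_span_insert_insert {V : Type*} [AddCommGroup V]
    [Module (ZMod 2) V] {s : Set V} {u w v : V}
    (hv : v ∈ span (ZMod 2) (insert u (insert w s)))
    (hu : v ∉ span (ZMod 2) (insert w s)) (hw : v ∉ span (ZMod 2) (insert u s)) :
    v - u - w ∈ span (ZMod 2) s := by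
  have h01 : ∀ k : ZMod 2, k = 0 ∨ k = 1 := by decide
  obtain ⟨k, z, hz, rfl⟩ := mem_span_insert.mp hv
  obtain ⟨l, t, ht, rfl⟩ := mem_span_insert.mp hz
  obtain rfl | rfl := h01 k
  · exact absurd (by simpa using hz) hu
  obtain rfl | rfl := h01 l
  · exact absurd (mem_span_insert.mpr ⟨1, t, ht, by simp⟩) hw
  simpa using ht

namespace Matroid

variable {α : Type*} {M N : Matroid α} {S B I X Y Z : Set α} {a b c d e : α}

section Representation

variable {K V : Type*} [DivisionRing K] [AddCommGroup V] [Module K V] {φ : α → V}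

theorem mem_span_image_of_isBase (hφ : ∀ I ⊆ M.E, M.Indep I ↔ LinearIndepOn K φ I)
    (hB : M.IsBase B) (he : e ∈ M.E) : φ e ∈ span K (φ '' B) := by
  by_cases heB : e ∈ B
  · exact subset_span (mem_image_of_mem φ heB)
  by_contra h
  refine (hB.insert_dep ⟨he, heB⟩).not_indep ((hφ _ (insert_subset he hB.subset_ground)).mpr ?_)
  exact (linearIndepOn_insert heB).mpr ⟨(hφ B hB.subset_ground).mp hB.indep, h⟩

theorem notMem_span_image_of_indep_insert (hφ : ∀ I ⊆ M.E, M.Indep I ↔ LinearIndepOn K φ I)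
    (h : M.Indep (insert e I)) (he : e ∉ I) : φ e ∉ span K (φ '' I) :=
  ((linearIndepOn_insert he).mp ((hφ _ h.subset_ground).mp h)).2

end Representation

theorem IsBinary.not_indep_exchanges (hM : M.IsBinary) (hZ : M.IsBase (insert a (insert b S)))
    (hY : M.Indep (insert c (insert d S))) (hc : c ∉ insert a (insert b S))
    (hd : d ∉ insert a (insert b S)) (hcd : c ≠ d) :
    ¬ (M.Indep (insert c (insert a S)) ∧ M.Indep (insert c (insert b S)) ∧
      M.Indep (insert d (insert a S)) ∧ M.Indep (insert d (insert b S))) := by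
  rintro ⟨hca, hcb, hda, hdb⟩
  obtain ⟨n, φ, hφ⟩ := hM
  -- Modulo `span (φ '' S)`, both `φ c` and `φ d` are forced to equal `φ a + φ b`.
  have hmod : ∀ y ∉ insert a (insert b S), M.Indep (insert y (insert a S)) →
      M.Indep (insert y (insert b S)) → φ y - φ a - φ b ∈ span (ZMod 2) (φ '' S) := by
    intro y hy hya hyb
    simp only [mem_insert_iff, not_or] at hy
    have hyZ := mem_span_image_of_isBase hφ hZ (hya.subset_ground (mem_insert _ _))
    rw [image_insert_eq, image_insert_eq] at hyZ
    refine sub_sub_mem_span_of_mem_span_insert_insert hyZ ?_ ?_ <;> rw [← image_insert_eq]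
    · exact notMem_span_image_of_indep_insert hφ hyb (by simp [hy.2.1, hy.2.2])
    · exact notMem_span_image_of_indep_insert hφ hya (by simp [hy.1, hy.2.2])
  have hcdS := sub_mem (hmod c hc hca hcb) (hmod d hd hda hdb)
  refine notMem_span_image_of_indep_insert hφ hY ?_ ?_
  · simp only [mem_insert_iff, not_or] at hc ⊢
    exact ⟨hcd, hc.2.2⟩
  · rw [image_insert_eq]
    exact mem_span_insert.mpr ⟨1, _, hcdS, by rw [one_smul]; abel⟩

theorem IsBase.isBase_insert_or_isBase_insert (hZ : M.IsBase (insert a (insert b S)))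
    (hY : M.IsBase (insert c (insert d S))) (hb : b ∉ insert c (insert d S)) (hab : a ≠ b) :
    M.IsBase (insert c (insert a S)) ∨ M.IsBase (insert d (insert a S)) := by
  obtain ⟨y, ⟨hyY, hyZ⟩, hy⟩ := hZ.exchange hY ⟨mem_insert_of_mem a (mem_insert b S), hb⟩
  have hbS : b ∉ S := fun h => hb (mem_insert_of_mem _ (mem_insert_of_mem _ h))
  rw [← insert_sdiff_singleton_comm hab, insert_sdiff_self_of_notMem hbS] at hy
  rcases hyY with rfl | rfl | hyS
  · exact .inl hy
  · exact .inr hy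
  · exact absurd (mem_insert_of_mem _ (mem_insert_of_mem _ hyS)) hyZ

theorem IsBase.isBase_insert_insert_of_not_isBase (hbc : M.IsBase (insert c (insert b S)))
    (had : M.IsBase (insert d (insert a S))) (hac : ¬ M.IsBase (insert c (insert a S)))
    (hb : b ∉ insert d (insert a S)) (hbc' : b ≠ c) : M.IsBase (insert c (insert d S)) := by
  obtain ⟨y, ⟨hyU, hyV⟩, hy⟩ := hbc.exchange had ⟨mem_insert_of_mem c (mem_insert b S), hb⟩
  have hbS : b ∉ S := fun h => hb (mem_insert_of_mem _ (mem_insert_of_mem _ h))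
  rw [← insert_sdiff_singleton_comm hbc'.symm, insert_sdiff_self_of_notMem hbS] at hy
  rcases hyU with rfl | rfl | hyS
  · rwa [insert_comm] at hy
  · rw [insert_comm] at hy
    exact absurd hy hac
  · exact absurd (mem_insert_of_mem _ (mem_insert_of_mem _ hyS)) hyV

theorem isBase_insert_insert_of_not_isBase_exchange (hNM : ∀ B, N.IsBase B → M.IsBase B)
    (hZ : M.IsBase (insert a (insert b S))) (hY : M.IsBase (insert c (insert d S)))
    (hb : b ∉ insert c (insert d S)) (hd : d ∉ insert a (insert b S)) (hab : a ≠ b) (hcd : c ≠ d)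
    (hNad : M.IsBase (insert d (insert a S)) → N.IsBase (insert d (insert a S)))
    (hNbc : M.IsBase (insert c (insert b S)) → N.IsBase (insert c (insert b S)))
    (hac : ¬ M.IsBase (insert c (insert a S))) : N.IsBase (insert c (insert d S)) := by
  have had := (hZ.isBase_insert_or_isBase_insert hY hb hab).resolve_left hac
  have hbc : M.IsBase (insert c (insert b S)) := by
    have := hY.isBase_insert_or_isBase_insert hZ hd hcd
    rw [insert_comm a, insert_comm b] at this
    exact this.resolve_left hac
  simp only [mem_insert_iff, not_or] at hb
  refine (hNbc hbc).isBase_insert_insert_of_not_isBase (hNad had) (fun h => hac (hNM _ h)) ?_ hb.1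
  simp [hab.symm, hb.2.1, hb.2.2]

theorem IsBinary.isBase_insert_insert (hM : M.IsBinary) (hNM : ∀ B, N.IsBase B → M.IsBase B)
    (hZ : M.IsBase (insert a (insert b S))) (hY : M.IsBase (insert c (insert d S)))
    (ha : a ∉ insert c (insert d S)) (hb : b ∉ insert c (insert d S))
    (hc : c ∉ insert a (insert b S)) (hd : d ∉ insert a (insert b S)) (hab : a ≠ b) (hcd : c ≠ d)
    (hN : ∀ x ∈ ({a, b} : Set α), ∀ y ∈ ({c, d} : Set α),
      M.IsBase (insert y (insert x S)) → N.IsBase (insert y (insert x S))) :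
    N.IsBase (insert c (insert d S)) := by
  -- Each of `a, b, c, d` takes part in some exchange giving a base of `M`, and binarity rules out
  -- all four; a missing exchange, say `(a, c)`, forces `(a, d)` and `(b, c)`.
  have hZ' : M.IsBase (insert b (insert a S)) := by rwa [insert_comm]
  have hY' : M.IsBase (insert d (insert c S)) := by rwa [insert_comm]
  have ha' : a ∉ insert d (insert c S) := by rwa [insert_comm]
  have hb' : b ∉ insert d (insert c S) := by rwa [insert_comm]
  have hc' : c ∉ insert b (insert a S) := by rwa [insert_comm]
  have hd' : d ∉ insert b (insert a S) := by rwa [insert_comm]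
  by_cases hac : M.IsBase (insert c (insert a S)); swap
  · exact isBase_insert_insert_of_not_isBase_exchange hNM hZ hY hb hd hab hcd
      (hN a (by simp) d (by simp)) (hN b (by simp) c (by simp)) hac
  by_cases hbc : M.IsBase (insert c (insert b S)); swap
  · exact isBase_insert_insert_of_not_isBase_exchange hNM hZ' hY ha hd' hab.symm hcd
      (hN b (by simp) d (by simp)) (hN a (by simp) c (by simp)) hbc
  by_cases had : M.IsBase (insert d (insert a S)); swap
  · rw [insert_comm]
    exact isBase_insert_insert_of_not_isBase_exchange hNM hZ hY' hb' hc hab hcd.symm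
      (hN a (by simp) c (by simp)) (hN b (by simp) d (by simp)) had
  by_cases hbd : M.IsBase (insert d (insert b S)); swap
  · rw [insert_comm]
    exact isBase_insert_insert_of_not_isBase_exchange hNM hZ' hY' ha' hc' hab.symm hcd.symm
      (hN b (by simp) c (by simp)) (hN a (by simp) d (by simp)) hbd
  exact absurd ⟨hac.indep, hbc.indep, had.indep, hbd.indep⟩
    (hM.not_indep_exchanges hZ hY.indep hc hd hcd)

theorem IsBinary.isBase_of_ncard_sdiff_le_two (hM : M.IsBinary)
    (hNM : ∀ B, N.IsBase B → M.IsBase B) (hZ : M.IsBase Z)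
    (hN : ∀ W, M.IsBase W → (Z \ W).ncard ≤ 1 → N.IsBase W) (hY : M.IsBase Y)
    (hZY : (Z \ Y).ncard ≤ 2) : N.IsBase Y := by
  obtain hZY | hZY := (show (Z \ Y).ncard ≤ 1 ∨ (Z \ Y).ncard = 2 by omega)
  · exact hN Y hY hZY
  obtain ⟨a, b, hab, hZY'⟩ := ncard_eq_two.mp hZY
  obtain ⟨c, d, hcd, hYZ'⟩ := ncard_eq_two.mp ((hY.ncard_sdiff_comm hZ).trans hZY)
  have ha : a ∈ Z \ Y := hZY' ▸ mem_insert a {b}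
  have hb : b ∈ Z \ Y := hZY' ▸ mem_insert_of_mem a rfl
  have hc : c ∈ Y \ Z := hYZ' ▸ mem_insert c {d}
  have hd : d ∈ Y \ Z := hYZ' ▸ mem_insert_of_mem c rfl
  obtain ⟨S, rfl, rfl⟩ : ∃ S, Z = insert a (insert b S) ∧ Y = insert c (insert d S) := by
    refine ⟨Z ∩ Y, ?_, ?_⟩
    · conv_lhs => rw [← inter_union_sdiff Z Y, hZY']
      ext; simp
    · conv_lhs => rw [← inter_union_sdiff Y Z, hYZ', inter_comm]
      ext; simp
  refine hM.isBase_insert_insert hNM hZ hY ha.2 hb.2 hc.2 hd.2 hab hcd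
    fun x hx y _ hxy => hN _ hxy ?_
  obtain ⟨x', hx'⟩ : ∃ x', insert a (insert b S) \ insert y (insert x S) ⊆ {x'} := by
    rcases hx with rfl | rfl
    · refine ⟨b, fun z hz => ?_⟩
      simp only [mem_sdiff, mem_insert_iff, mem_singleton_iff] at hz ⊢
      tauto
    · refine ⟨a, fun z hz => ?_⟩
      simp only [mem_sdiff, mem_insert_iff, mem_singleton_iff] at hz ⊢
      tauto
  exact (ncard_le_ncard hx').trans (ncard_singleton x').le

theorem IsBase.induction_on_exchange [M.RankFinite] {P : Set α → Prop} (hX : M.IsBase X)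
    (hPX : P X) (step : ∀ Z W, M.IsBase Z → M.IsBase W → (Z \ W).ncard = 1 → P Z → P W)
    (hY : M.IsBase Y) : P Y := by
  induction hXY : (Y \ X).ncard generalizing Y with
  | zero =>
    rw [ncard_eq_zero hY.finite.sdiff, sdiff_eq_empty] at hXY
    rwa [hY.eq_of_subset_isBase hX hXY]
  | succ n ih =>
    obtain ⟨e, he⟩ := nonempty_of_ncard_ne_zero (s := Y \ X) (by omega)
    obtain ⟨f, hf, hW⟩ := hY.exchange hX he
    refine step _ Y hW hY ?_ (ih hW ?_)
    · rw [insert_sdiff_of_notMem _ hf.2, sdiff_eq_empty.mpr sdiff_subset, insert_empty_eq,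
        ncard_singleton]
    · rw [insert_sdiff_of_mem _ hf.1, Set.sdiff_sdiff_comm, ncard_sdiff_singleton_of_mem he,
        hXY, Nat.add_sub_cancel]

end Matroid

section BasePolytope

open Matroid

variable {α : Type*} {M N : Matroid α} {T X Y : Set α}

theorem sum_indicator_one_eq_ncard_inter (hT : T.Finite) (B : Set α) :
    ∑ e ∈ hT.toFinset, B.indicator (1 : α → ℝ) e = (T ∩ B).ncard := by
  classical
  rw [ncard_eq_toFinset_card _ (hT.inter_of_left B), Finset.sum_indicator_eq_sum_filter]
  simp only [Pi.one_apply, Finset.sum_const, nsmul_eq_mul, mul_one, Nat.cast_inj]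
  congr 1
  ext
  simp

theorem sum_le_of_mem_basePolytope (hT : T.Finite) {k : ℝ}
    (hk : ∀ B, N.IsBase B → ((T ∩ B).ncard : ℝ) ≤ k) {z : α → ℝ} (hz : z ∈ basePolytope N) :
    ∑ e ∈ hT.toFinset, z e ≤ k := by
  have hlin : IsLinearMap ℝ fun x : α → ℝ => ∑ e ∈ hT.toFinset, x e :=
    ⟨fun x y => Finset.sum_add_distrib, fun c x => by simp [Finset.mul_sum]⟩
  refine convexHull_min ?_ (convex_halfSpace_le hlin k) hz
  rintro _ ⟨B, hB, rfl⟩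
  exact (sum_indicator_one_eq_ncard_inter hT B).trans_le (hk B hB)

theorem half_smul_add_indicator_notMem_basePolytope [M.RankFinite]
    (hNM : ∀ B, N.IsBase B → M.IsBase B) (hY : M.IsBase Y) (hYN : ¬ N.IsBase Y)
    (hYX : (Y \ X).ncard = 1) :
    (1 / 2 : ℝ) • (X.indicator 1 + Y.indicator 1) ∉ basePolytope N := by
  intro hm
  have hcard : (Y ∩ X).ncard + 1 = Y.ncard :=
    hYX ▸ ncard_inter_add_ncard_sdiff_eq_ncard Y X hY.finite
  have hbound : ∀ B, N.IsBase B → ((Y ∩ B).ncard : ℝ) ≤ Y.ncard - 1 := by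
    intro B hB
    have hYB : Y ∩ B ⊂ Y :=
      inter_ssubset_left_iff.mpr fun h => hYN (hY.eq_of_subset_isBase (hNM B hB) h ▸ hB)
    have := ncard_lt_ncard hYB hY.finite
    rw [le_sub_iff_add_le]
    exact_mod_cast this
  have := sum_le_of_mem_basePolytope hY.finite hbound hm
  simp only [Pi.smul_apply, Pi.add_apply, smul_eq_mul, ← Finset.mul_sum, Finset.sum_add_distrib,
    sum_indicator_one_eq_ncard_inter, inter_self] at this
  rw [← hcard] at this
  push_cast at this
  linarith

theorem isBase_of_basePolytope_eq_union [M.RankFinite] {M₁ M₂ : Matroid α}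
    (h₁ : ∀ B, M₁.IsBase B → M.IsBase B) (h₂ : ∀ B, M₂.IsBase B → M.IsBase B)
    (hP : basePolytope M = basePolytope M₁ ∪ basePolytope M₂)
    (hX₁ : M₁.IsBase X) (hX₂ : ¬ M₂.IsBase X) (hY : M.IsBase Y) (hXY : (X \ Y).ncard ≤ 1) :
    M₁.IsBase Y := by
  by_contra hY₁
  have hX := h₁ X hX₁
  have hXY : (X \ Y).ncard = 1 := by
    refine hXY.antisymm (Nat.one_le_iff_ne_zero.mpr fun h => hY₁ ?_)
    rw [ncard_eq_zero hX.finite.sdiff, sdiff_eq_empty] at h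
    rwa [← hX.eq_of_subset_isBase hY h]
  have hm : (1 / 2 : ℝ) • (X.indicator 1 + Y.indicator 1) ∈ basePolytope M := by
    rw [smul_add]
    exact convex_convexHull ℝ _ (subset_convexHull ℝ _ (mem_image_of_mem _ hX))
      (subset_convexHull ℝ _ (mem_image_of_mem _ hY)) (by norm_num) (by norm_num) (by norm_num)
  rcases hP ▸ hm with hm | hm
  · exact half_smul_add_indicator_notMem_basePolytope h₁ hY hY₁
      ((hY.ncard_sdiff_comm hX).trans hXY) hm
  · rw [add_comm] at hm
    exact half_smul_add_indicator_notMem_basePolytope h₂ hX hX₂ hXY hm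

end BasePolytope

theorem stmt_13 {α : Type*} [Fintype α] (M : Matroid α) (hbin : M.IsBinary) :
    ¬ ∃ M1 M2 : Matroid α,
      {B | M1.IsBase B} ⊂ {B | M.IsBase B} ∧ {B | M2.IsBase B} ⊂ {B | M.IsBase B} ∧
      {B | M1.IsBase B} ∪ {B | M2.IsBase B} = {B | M.IsBase B} ∧
      basePolytope M = basePolytope M1 ∪ basePolytope M2 ∧
      IsExtreme ℝ (basePolytope M1) (basePolytope M1 ∩ basePolytope M2) ∧
      IsExtreme ℝ (basePolytope M2) (basePolytope M1 ∩ basePolytope M2) := by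
  rintro ⟨M₁, M₂, h₁, h₂, hcov, hP, -, -⟩
  obtain ⟨X, hX, hX₂⟩ := exists_of_ssubset h₂
  have hX₁ : M₁.IsBase X := (hcov.symm.subset hX).resolve_right hX₂
  obtain ⟨Y, hY, hY₁⟩ := exists_of_ssubset h₁
  refine hY₁ (hX.induction_on_exchange
    (P := fun Z => ∀ W, M.IsBase W → (Z \ W).ncard ≤ 1 → M₁.IsBase W)
    (fun W => isBase_of_basePolytope_eq_union h₁.subset h₂.subset hP hX₁ hX₂)
    (fun Z W hZ hW hZW hN V hV hWV => hbin.isBase_of_ncard_sdiff_le_two h₁.subset hZ hN hV ?_)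
    hY Y hY (by simp))
  calc (Z \ V).ncard ≤ (Z \ W ∪ W \ V).ncard :=
        ncard_le_ncard (sdiff_triangle Z W V) (hZ.finite.sdiff.union hW.finite.sdiff)
    _ ≤ (Z \ W).ncard + (W \ V).ncard := ncard_union_le _ _
    _ ≤ 2 := by omega
end

section
/- Let M be a binary matroid such that some base X of M has exactly d neighbors in the base graph G(M), where d = dim P(M). Then P(M) is indecomposable: it admits no matroid base polytope decomposition P(M) = ∪_{i=1}^t P(M_i) with t ≥ 2 where each intersection P(M_i) ∩ P(M_j) is a common face. -/
/-!
A decomposition of `P(M)` into finitely many closed pieces must, near the vertex `1_X`, be covered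
by the pieces through `1_X`; since a convex set is never a finite union of proper affine subspaces,
one of these pieces `P(Nᵢ)` spans all of `P(M)`, so its dimension is `d`. Every difference of
vertices of `P(Nᵢ)` is a sum of edge directions at `1_X` (symmetric exchange), so `X` has at least
`d` neighbours in the base graph of `Nᵢ`, hence all its `d` neighbours in `G(M)` are bases of `Nᵢ`.
In a binary matroid this forces every base of `M` to be a base of `Nᵢ`, contradicting that `Nᵢ` has fewer bases than `M`.
-/

open Set Module Topology

theorem AffineSubspace.lineMap_mem_of_lineMap_mem {k V P : Type*} [Field k] [AddCommGroup V]
    [Module k V] [AddTorsor V P] {Q : AffineSubspace k P} {x y : P} {s t : k} (hst : s ≠ t)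
    (hs : AffineMap.lineMap x y s ∈ Q) (ht : AffineMap.lineMap x y t ∈ Q) (r : k) :
    AffineMap.lineMap x y r ∈ Q := by
  have hr : AffineMap.lineMap s t ((r - s) / (t - s)) = r := by
    rw [AffineMap.lineMap_apply_ring']
    field_simp [sub_ne_zero.2 hst.symm]
    ring
  rw [← hr, AffineMap.apply_lineMap]
  exact AffineMap.lineMap_mem _ hs ht

theorem Convex.exists_subset_of_subset_biUnion_affineSubspace {ι V : Type*} [AddCommGroup V]
    [Module ℝ V] {C : Set V} (hC : Convex ℝ C) (hne : C.Nonempty) {s : Finset ι}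
    {A : ι → AffineSubspace ℝ V} (hCA : C ⊆ ⋃ i ∈ s, (A i : Set V)) : ∃ i ∈ s, C ⊆ A i := by
  classical
  induction s using Finset.induction_on with
  | empty => simpa using hCA hne.some_mem
  | insert j s hj IH =>
    by_contra! hnot
    obtain ⟨x, hxC, hxA⟩ := not_subset.1 (hnot j (Finset.mem_insert_self j s))
    obtain ⟨y, hyC, hys⟩ : ∃ y ∈ C, y ∉ ⋃ i ∈ s, (A i : Set V) := by
      refine not_subset.1 fun h => ?_
      obtain ⟨i, hi, hCi⟩ := IH h
      exact hnot i (Finset.mem_insert_of_mem hi) hCi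
    have hyA : y ∈ A j := by
      obtain ⟨i, hi, hyi⟩ := mem_iUnion₂.1 (hCA hyC)
      obtain rfl | hi := Finset.mem_insert.1 hi
      · exact hyi
      · exact absurd (mem_biUnion hi hyi) hys
    -- The line through `y ∈ A j` and `x ∉ A j` meets `A j` only at `y`.
    have hcov : ∀ r ∈ Ioc (0 : ℝ) 1, ∃ i ∈ s, AffineMap.lineMap y x r ∈ A i := by
      intro r hr
      have hmem : AffineMap.lineMap y x r ∈ ⋃ i ∈ insert j s, (A i : Set V) :=
        hCA (hC.lineMap_mem hyC hxC ⟨hr.1.le, hr.2⟩)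
      simp only [Finset.mem_insert, mem_iUnion, exists_prop] at hmem
      obtain ⟨i, rfl | hi, hri⟩ := hmem
      · refine absurd ?_ hxA
        simpa using (A i).lineMap_mem_of_lineMap_mem hr.1.ne (by simpa using hyA) hri 1
      · exact ⟨i, hi, hri⟩
    have : Nonempty ι := ⟨j⟩
    choose! σ hσs hσA using hcov
    obtain ⟨r, hr, r', hr', hrr', hσ⟩ :=
      (Ioc_infinite zero_lt_one).exists_ne_map_eq_of_mapsTo hσs s.finite_toSet
    have := (A (σ r)).lineMap_mem_of_lineMap_mem hrr' (hσA r hr) (hσ ▸ hσA r' hr') 0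
    exact hys (mem_biUnion (hσs r hr) (by simpa using this))

theorem Convex.subset_affineSpan_inter_of_mem_nhds {V : Type*} [AddCommGroup V] [Module ℝ V]
    [TopologicalSpace V] [ContinuousAdd V] [ContinuousSMul ℝ V] {K U : Set V} {x : V}
    (hK : Convex ℝ K) (hx : x ∈ K) (hU : U ∈ 𝓝 x) : K ⊆ affineSpan ℝ (K ∩ U) := by
  intro q hq
  have hnear : ∀ᶠ r in 𝓝[>] (0 : ℝ), r ∈ Ioc 0 1 ∧ AffineMap.lineMap x q r ∈ U := by
    have hcont : Continuous fun r : ℝ => AffineMap.lineMap x q r := by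
      simp only [AffineMap.lineMap_apply_module]; fun_prop
    have hU0 : ∀ᶠ r in 𝓝 (0 : ℝ), AffineMap.lineMap x q r ∈ U :=
      hcont.continuousAt.preimage_mem_nhds (by simpa using hU)
    filter_upwards [self_mem_nhdsWithin, nhdsWithin_le_nhds (eventually_le_nhds zero_lt_one),
      nhdsWithin_le_nhds hU0] with r hr0 hr1 hrU
    exact ⟨⟨hr0, hr1⟩, hrU⟩
  obtain ⟨r, hr, hrU⟩ := hnear.exists
  have h0 : AffineMap.lineMap x q (0 : ℝ) ∈ affineSpan ℝ (K ∩ U) :=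
    subset_affineSpan ℝ _ (by simpa using ⟨hx, mem_of_mem_nhds hU⟩)
  have hr' : AffineMap.lineMap x q r ∈ affineSpan ℝ (K ∩ U) :=
    subset_affineSpan ℝ _ ⟨hK.lineMap_mem hx hq ⟨hr.1.le, hr.2⟩, hrU⟩
  simpa using (affineSpan ℝ (K ∩ U)).lineMap_mem_of_lineMap_mem hr.1.ne h0 hr' 1

theorem Convex.exists_mem_subset_affineSpan_of_subset_iUnion {ι V : Type*} [Finite ι]
    [NormedAddCommGroup V] [NormedSpace ℝ V] {K : Set V} {P : ι → Set V} {x : V}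
    (hK : Convex ℝ K) (hP : ∀ i, IsClosed (P i)) (hKP : K ⊆ ⋃ i, P i) (hx : x ∈ K) :
    ∃ i, x ∈ P i ∧ K ⊆ affineSpan ℝ (P i) := by
  classical
  have : Fintype ι := Fintype.ofFinite ι
  obtain ⟨ε, hε, hball⟩ : ∃ ε > 0, ∀ y ∈ Metric.ball x ε, ∀ i, y ∈ P i → x ∈ P i := by
    have : ∀ᶠ y in 𝓝 x, ∀ i, y ∈ P i → x ∈ P i := by
      refine Filter.eventually_all.2 fun i => ?_
      by_cases hxi : x ∈ P i
      · exact .of_forall fun _ _ => hxi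
      · filter_upwards [(hP i).isOpen_compl.mem_nhds hxi] with y hy h using absurd h hy
    exact Metric.eventually_nhds_iff_ball.1 this
  set C := K ∩ Metric.ball x ε
  have hCA : C ⊆ ⋃ i ∈ Finset.univ.filter (x ∈ P ·), (affineSpan ℝ (P i) : Set V) := by
    rintro y ⟨hyK, hyB⟩
    obtain ⟨i, hyi⟩ := mem_iUnion.1 (hKP hyK)
    exact mem_biUnion (by simpa using hball y hyB i hyi) (subset_affineSpan ℝ _ hyi)
  obtain ⟨i, hi, hCi⟩ := (hK.inter (convex_ball x ε)).exists_subset_of_subset_biUnion_affineSubspace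
    ⟨x, hx, Metric.mem_ball_self hε⟩ hCA
  refine ⟨i, by simpa using hi, ?_⟩
  exact (hK.subset_affineSpan_inter_of_mem_nhds hx (Metric.ball_mem_nhds x hε)).trans
    (affineSpan_le.2 hCi)

lemma Set.ncard_insert_sdiff_sdiff {α : Type*} [Finite α] {X Z : Set α} {a b : α} (ha : a ∈ X)
    (hb : b ∈ Z \ X) : (insert a (Z \ {b}) \ X).ncard = (Z \ X).ncard - 1 := by
  have : insert a (Z \ {b}) \ X = (Z \ X) \ {b} := by
    ext x
    simp only [mem_sdiff, mem_insert_iff, mem_singleton_iff]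
    grind
  rw [this, ncard_sdiff_singleton_of_mem hb]

namespace Matroid

variable {α : Type*} {M N : Matroid α} {B X Y Z C₁ C₂ : Set α} {a b e f : α}

def baseNeighbors (M : Matroid α) (X : Set α) : Set (Set α) :=
  {Y | M.IsBase Y ∧ (symmDiff X Y).ncard = 2}

lemma baseNeighbors_mono (h : ∀ ⦃B⦄, N.IsBase B → M.IsBase B) :
    N.baseNeighbors X ⊆ M.baseNeighbors X :=
  fun _ hY => ⟨h hY.1, hY.2⟩

lemma IsBase.ncard_symmDiff [Finite α] (hX : M.IsBase X) (hY : M.IsBase Y) :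
    (symmDiff X Y).ncard = 2 * (Y \ X).ncard := by
  rw [Set.symmDiff_def, ncard_union_eq disjoint_sdiff_sdiff, hX.ncard_sdiff_comm hY, two_mul]

lemma IsBase.mem_baseNeighbors_iff [Finite α] (hX : M.IsBase X) :
    Y ∈ M.baseNeighbors X ↔ M.IsBase Y ∧ (Y \ X).ncard = 1 := by
  refine and_congr_right fun hY => ?_
  rw [hX.ncard_symmDiff hY]
  omega

lemma IsBase.isBase_insert_sdiff_iff (hZ : M.IsBase Z) (he : e ∈ M.E) (heZ : e ∉ Z)
    (hb : b ∈ Z) : M.IsBase (insert e (Z \ {b})) ↔ b ∈ M.fundCircuit e Z := by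
  have hne : b ≠ e := fun h => heZ (h ▸ hb)
  rw [hZ.indep.mem_fundCircuit_iff (by rwa [hZ.closure_eq]) heZ,
    ← insert_sdiff_singleton_comm hne.symm]
  exact ⟨IsBase.indep, hZ.exchange_isBase_of_indep heZ⟩

lemma IsBase.exists_symm_exchange (hX : M.IsBase X) (hZ : M.IsBase Z) (hb : b ∈ Z \ X) :
    ∃ a ∈ X \ Z, M.IsBase (insert b (X \ {a})) ∧ M.IsBase (insert a (Z \ {b})) := by
  have hbE := hZ.subset_ground hb.1
  -- A circuit and a cocircuit never meet in exactly one element.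
  obtain ⟨a, ⟨haC, haK⟩, hab⟩ := ((hX.fundCircuit_isCircuit hbE hb.2).isCocircuit_inter_nontrivial
    (fundCocircuit_isCocircuit hb.1 hZ) ⟨b, mem_fundCircuit .., mem_fundCocircuit ..⟩).exists_ne b
  have haX : a ∈ X := by
    simpa [hab] using M.fundCircuit_subset_insert b X haC
  have haZ : a ∉ Z := by
    have := M.fundCocircuit_subset_insert_compl b Z haK
    simp only [mem_insert_iff, hab, mem_sdiff, false_or] at this
    exact this.2
  exact ⟨a, ⟨haX, haZ⟩, (hX.isBase_insert_sdiff_iff hbE hb.2 haX).2 haC,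
    (hZ.isBase_insert_sdiff_iff (hX.subset_ground haX) haZ hb.1).2
      (hZ.mem_fundCocircuit_iff_mem_fundCircuit.1 haK)⟩

lemma IsCircuit.exists_linearCombination_eq_zero {R V : Type*} [Ring R] [AddCommGroup V]
    [Module R V] {φ : α → V} (hφ : ∀ I ⊆ M.E, M.Indep I ↔ LinearIndepOn R φ I) {C : Set α}
    (hC : M.IsCircuit C) :
    ∃ l : α →₀ R, (l.support : Set α) = C ∧ Finsupp.linearCombination R φ l = 0 := by
  have hdep : ¬ LinearIndepOn R φ C := fun h => hC.not_indep ((hφ C hC.subset_ground).2 h)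
  simp only [linearIndepOn_iff, not_forall, exists_prop] at hdep
  obtain ⟨l, hlC, hl0, hne⟩ := hdep
  refine ⟨l, hC.eq_of_not_indep_subset (fun hI => hne ?_) hlC, hl0⟩
  rw [hφ _ (hlC.trans hC.subset_ground), linearIndepOn_iff] at hI
  exact hI l (Finsupp.mem_supported _ _ |>.2 subset_rfl) hl0

lemma IsBinary.dep_symmDiff (hM : M.IsBinary) (hC₁ : M.IsCircuit C₁) (hC₂ : M.IsCircuit C₂)
    (hne : C₁ ≠ C₂) : M.Dep (symmDiff C₁ C₂) := by
  obtain ⟨n, φ, hφ⟩ := hM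
  replace hφ : ∀ I ⊆ M.E, M.Indep I ↔ LinearIndepOn (ZMod 2) φ I := hφ
  obtain ⟨l₁, hl₁, h₁⟩ := hC₁.exists_linearCombination_eq_zero hφ
  obtain ⟨l₂, hl₂, h₂⟩ := hC₂.exists_linearCombination_eq_zero hφ
  have hsupp : ((l₁ + l₂).support : Set α) = symmDiff C₁ C₂ := by
    ext x
    simp only [← hl₁, ← hl₂, Finset.mem_coe, Finsupp.mem_support_iff, Finsupp.add_apply,
      mem_symmDiff]
    generalize l₁ x = u, l₂ x = v
    revert u v
    decide
  have hE : symmDiff C₁ C₂ ⊆ M.E :=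
    symmDiff_subset_union.trans (union_subset hC₁.subset_ground hC₂.subset_ground)
  refine ⟨fun hI => ?_, hE⟩
  rw [hφ _ hE, linearIndepOn_iff] at hI
  have h0 := hI (l₁ + l₂) ((Finsupp.mem_supported _ _).2 hsupp.subset) (by simp [h₁, h₂])
  rw [h0, Finsupp.support_zero, Finset.coe_empty] at hsupp
  exact (symmDiff_nonempty.2 hne).ne_empty hsupp.symm

lemma IsBase.exists_mem_fundCircuit_sdiff (hX : M.Indep X) (hZ : M.IsBase Z) (hf : f ∈ X \ Z) :
    ∃ z ∈ Z \ X, z ∈ M.fundCircuit f Z := by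
  have hC := hZ.fundCircuit_isCircuit (hX.subset_ground hf.1) hf.2
  obtain ⟨z, hzC, hzX⟩ := not_subset.1 fun h => hC.not_indep (hX.subset h)
  have hzZ : z ∈ Z := by
    simpa [show z ≠ f from fun h => hzX (h ▸ hf.1)] using M.fundCircuit_subset_insert f Z hzC
  exact ⟨z, ⟨hzZ, hzX⟩, hzC⟩

lemma IsBinary.exists_not_sdiff_subset_fundCircuit (hM : M.IsBinary) (hX : M.Indep X)
    (hZ : M.IsBase Z) (hXZ : (X \ Z).Nontrivial) :
    ∃ f ∈ X \ Z, ¬ Z \ X ⊆ M.fundCircuit f Z := by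
  by_contra! hsub
  obtain ⟨f₁, hf₁, f₂, hf₂, hne⟩ := hXZ
  have hC : ∀ f ∈ X \ Z, M.IsCircuit (M.fundCircuit f Z) := fun f hf =>
    hZ.fundCircuit_isCircuit (hX.subset_ground hf.1) hf.2
  have hins : ∀ f, M.fundCircuit f Z ⊆ insert f Z := fun f => M.fundCircuit_subset_insert f Z
  -- Both circuits contain `Z \ X`, so their symmetric difference lies in `X`.
  have hsX : symmDiff (M.fundCircuit f₁ Z) (M.fundCircuit f₂ Z) ⊆ X := by
    intro x hx
    rcases hx with ⟨hx₁, hx₂⟩ | ⟨hx₂, hx₁⟩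
    · rcases hins f₁ hx₁ with rfl | hxZ
      · exact hf₁.1
      · exact by_contra fun hxX => hx₂ (hsub f₂ hf₂ ⟨hxZ, hxX⟩)
    · rcases hins f₂ hx₂ with rfl | hxZ
      · exact hf₂.1
      · exact by_contra fun hxX => hx₁ (hsub f₁ hf₁ ⟨hxZ, hxX⟩)
  have hdiff : M.fundCircuit f₁ Z ≠ M.fundCircuit f₂ Z := by
    intro h
    have := hins f₂ (h ▸ M.mem_fundCircuit f₁ Z)
    exact this.elim hne hf₁.2
  exact (hM.dep_symmDiff (hC f₁ hf₁) (hC f₂ hf₂) hdiff).not_indep (hX.subset hsX)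

theorem IsBinary.isBase_of_baseNeighbors_subset [Finite α] (hM : M.IsBinary)
    (hNM : ∀ ⦃B⦄, N.IsBase B → M.IsBase B) (hXN : N.IsBase X)
    (hnbr : M.baseNeighbors X ⊆ N.baseNeighbors X) (hZ : M.IsBase Z) : N.IsBase Z := by
  have hX := hNM hXN
  induction h : (Z \ X).ncard using Nat.strong_induction_on generalizing Z with
  | _ k IH =>
  obtain rfl | rfl | hk := show k = 0 ∨ k = 1 ∨ 2 ≤ k by omega
  · rwa [hZ.eq_of_subset_isBase hX (sdiff_eq_empty.1 ((ncard_eq_zero).1 h))]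
  · exact (hnbr ((hX.mem_baseNeighbors_iff).2 ⟨hZ, h⟩)).1
  have hXZ : (X \ Z).Nontrivial := by
    rw [← one_lt_ncard_iff_nontrivial, hX.ncard_sdiff_comm hZ]
    omega
  obtain ⟨f, hf, hnsub⟩ := hM.exists_not_sdiff_subset_fundCircuit hX.indep hZ hXZ
  obtain ⟨b, hb, hbC⟩ := not_subset.1 hnsub
  obtain ⟨z, hz, hzC⟩ := hZ.exists_mem_fundCircuit_sdiff hX.indep hf
  have hfE := hX.subset_ground hf.1
  have hfb : ¬ M.IsBase (insert f (Z \ {b})) := by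
    rwa [hZ.isBase_insert_sdiff_iff hfE hf.2 hb.1]
  obtain ⟨a, ha, hU⟩ := hZ.exchange hX hb
  have hV : M.IsBase (insert f (Z \ {z})) := (hZ.isBase_insert_sdiff_iff hfE hf.2 hz.1).2 hzC
  have hNU := IH (k - 1) (by omega) hU (by rw [ncard_insert_sdiff_sdiff ha.1 hb, h])
  have hNV := IH (k - 1) (by omega) hV (by rw [ncard_insert_sdiff_sdiff hf.1 hz, h])
  have haf : a ≠ f := by rintro rfl; exact hfb hU
  -- Exchanging `a` out of `U = Z - b + a` towards `V = Z - z + f` in `N` brings back `b` or `f`.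
  obtain ⟨g, hg, hgN⟩ := hNU.exchange hNV ⟨mem_insert a _, by simp [haf, ha.2]⟩
  have hUa : insert a (Z \ {b}) \ {a} = Z \ {b} := insert_sdiff_self_of_notMem (fun h => ha.2 h.1)
  rw [hUa] at hgN
  obtain rfl | rfl : g = f ∨ g = b := by
    simp only [mem_sdiff, mem_insert_iff, mem_singleton_iff] at hg
    grind
  · exact absurd (hNM hgN) hfb
  · rwa [insert_sdiff_singleton, insert_eq_of_mem hb.1] at hgN

lemma basePolytope_eq_convexHull (M : Matroid α) :
    basePolytope M = convexHull ℝ ((fun B : Set α => B.indicator 1) '' {B | M.IsBase B}) := rfl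

lemma indicator_mem_basePolytope (hB : M.IsBase B) : B.indicator 1 ∈ basePolytope M :=
  subset_convexHull ℝ _ ⟨B, hB, rfl⟩

lemma isClosed_basePolytope [Finite α] (M : Matroid α) : IsClosed (basePolytope M) :=
  ((toFinite _).isCompact_convexHull (𝕜 := ℝ)).isClosed

lemma basePolytope_subset_pi_Icc (M : Matroid α) :
    basePolytope M ⊆ univ.pi fun _ => Icc 0 1 := by
  refine convexHull_min ?_ (convex_pi fun _ _ => convex_Icc 0 1)
  rintro _ ⟨B, -, rfl⟩ a -
  by_cases ha : a ∈ B <;> simp [ha]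

lemma _root_.Set.indicator_one_mem_extremePoints_pi_Icc (B : Set α) :
    B.indicator 1 ∈ (univ.pi fun _ : α => Icc (0 : ℝ) 1).extremePoints ℝ := by
  rw [extremePoints_pi]
  intro a _
  by_cases ha : a ∈ B <;> simp [ha]

lemma isBase_of_indicator_mem_basePolytope (h : X.indicator 1 ∈ basePolytope N) : N.IsBase X := by
  have hext := inter_extremePoints_subset_extremePoints_of_subset (basePolytope_subset_pi_Icc N)
    ⟨h, X.indicator_one_mem_extremePoints_pi_Icc⟩
  rw [basePolytope_eq_convexHull] at hext
  obtain ⟨B, hB, hBX⟩ := extremePoints_convexHull_subset hext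
  rwa [indicator_one_inj ℝ hBX] at hB

lemma indicator_insert_sdiff_add (ha : a ∈ X) (hb : b ∉ X) :
    (insert b (X \ {a})).indicator (1 : α → ℝ) + ({a} : Set α).indicator 1 =
      X.indicator 1 + ({b} : Set α).indicator 1 := by
  classical
  ext x
  simp only [Pi.add_apply, indicator_apply, mem_insert_iff, mem_sdiff, mem_singleton_iff,
    Pi.one_apply]
  split_ifs <;> grind

lemma IsBase.indicator_sub_mem_span [Finite α] (hX : N.IsBase X) (hZ : N.IsBase Z) :
    Z.indicator 1 - X.indicator 1 ∈ Submodule.span ℝ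
      ((fun Y : Set α => Y.indicator (1 : α → ℝ) - X.indicator 1) '' N.baseNeighbors X) := by
  induction h : (Z \ X).ncard using Nat.strong_induction_on generalizing Z with
  | _ k IH =>
  obtain rfl | hk := Nat.eq_zero_or_pos k
  · simp [hZ.eq_of_subset_isBase hX (sdiff_eq_empty.1 ((ncard_eq_zero).1 h))]
  obtain ⟨b, hb⟩ := nonempty_of_ncard_ne_zero (s := Z \ X) (by omega)
  obtain ⟨a, ha, hY, hZ'⟩ := hX.exists_symm_exchange hZ hb
  have hY' : insert b (X \ {a}) ∈ N.baseNeighbors X := by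
    refine (hX.mem_baseNeighbors_iff).2 ⟨hY, ?_⟩
    rw [← ncard_singleton b]
    congr 1
    ext x
    simp only [mem_sdiff, mem_insert_iff, mem_singleton_iff]
    grind
  have hZ'mem := IH (k - 1) (by omega) hZ' (by rw [Set.ncard_insert_sdiff_sdiff ha.1 hb, h])
  have key : Z.indicator (1 : α → ℝ) - X.indicator 1 =
      ((insert a (Z \ {b})).indicator 1 - X.indicator 1) +
        ((insert b (X \ {a})).indicator 1 - X.indicator 1) := by
    have h1 := indicator_insert_sdiff_add hb.1 ha.2
    have h2 := indicator_insert_sdiff_add ha.1 hb.2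
    linear_combination (norm := abel) -h1 - h2
  rw [key]
  exact add_mem hZ'mem (Submodule.subset_span ⟨_, hY', rfl⟩)

lemma IsBase.finrank_direction_basePolytope_le [Finite α] (hX : N.IsBase X) :
    finrank ℝ (affineSpan ℝ (basePolytope N)).direction ≤ (N.baseNeighbors X).ncard := by
  have : Fintype α := Fintype.ofFinite α
  rw [basePolytope_eq_convexHull, affineSpan_convexHull, direction_affineSpan,
    vectorSpan_eq_span_vsub_set_right ℝ (mem_image_of_mem _ (show X ∈ {B | N.IsBase B} from hX))]
  set E := (fun Y : Set α => Y.indicator (1 : α → ℝ) - X.indicator 1) '' N.baseNeighbors X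
  have : Fintype E := (toFinite E).fintype
  calc finrank ℝ (Submodule.span ℝ _)
      ≤ finrank ℝ (Submodule.span ℝ E) := by
        refine Submodule.finrank_mono (Submodule.span_le.2 ?_)
        rintro _ ⟨_, ⟨Z, hZ, rfl⟩, rfl⟩
        exact hX.indicator_sub_mem_span hZ
    _ ≤ E.toFinset.card := finrank_span_le_card E
    _ = E.ncard := (ncard_eq_toFinset_card' E).symm
    _ ≤ (N.baseNeighbors X).ncard := ncard_image_le (toFinite _)

end Matroid

theorem stmt_14 {α : Type*} [Fintype α] (M : Matroid α) (hbin : M.IsBinary)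
    (X : Set α) (hX : M.IsBase X)
    (hdeg : {Y | M.IsBase Y ∧ (symmDiff X Y).ncard = 2}.ncard =
      Module.finrank ℝ (affineSpan ℝ (basePolytope M)).direction) :
    ¬ ∃ (t : ℕ) (N : Fin t → Matroid α), 2 ≤ t ∧
      (∀ i, {B | (N i).IsBase B} ⊂ {B | M.IsBase B}) ∧
      basePolytope M = ⋃ i, basePolytope (N i) ∧
      ∀ i j, i ≠ j →
        IsExtreme ℝ (basePolytope (N i)) (basePolytope (N i) ∩ basePolytope (N j)) := by
  rintro ⟨t, N, -, hsub, hcover, -⟩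
  obtain ⟨i, hXi, hspan⟩ := (convex_convexHull ℝ _).exists_mem_subset_affineSpan_of_subset_iUnion
    (fun i => (N i).isClosed_basePolytope) hcover.subset (Matroid.indicator_mem_basePolytope hX)
  have hXN : (N i).IsBase X := Matroid.isBase_of_indicator_mem_basePolytope hXi
  have hnbr : (N i).baseNeighbors X = M.baseNeighbors X := by
    refine eq_of_subset_of_ncard_le (Matroid.baseNeighbors_mono fun _ h => (hsub i).subset h)
      ?_ (toFinite _)
    calc (M.baseNeighbors X).ncard = finrank ℝ (affineSpan ℝ (basePolytope M)).direction := hdeg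
      _ ≤ finrank ℝ (affineSpan ℝ (basePolytope (N i))).direction :=
        Submodule.finrank_mono (AffineSubspace.direction_le (affineSpan_le.2 hspan))
      _ ≤ ((N i).baseNeighbors X).ncard := hXN.finrank_direction_basePolytope_le
  obtain ⟨B, hBM, hBN⟩ := exists_of_ssubset (hsub i)
  exact hBN (hbin.isBase_of_baseNeighbors_subset (fun _ h => (hsub i).subset h) hXN
    hnbr.symm.subset hBM)
end

section
/- Let P be a polytope with vertex set X and H a hyperplane meeting P but not supporting it, splitting P into P1 = P ∩ H⁻ and P2 = P ∩ H⁺, and partitioning X into X1 = X ∩ H⁻ and X2 = X ∩ H⁺ with W = X1 ∩ X2 = X ∩ H. Then every edge [u,v] of P has both endpoints in X1 or both in X2 if and only if P ∩ H = conv(W). -/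
/-!
Let `z` be an extreme point of the slice `P ∩ H`, `H = {f = c}`. The directions `d` with
`z ± ε • d ∈ P` for some `ε > 0` form a subspace, which meets `ker f` only in `0` because `z` is
extreme in the slice; so any two such directions are parallel. Writing `z` as a convex combination
of vertices with positive weights, every vertex used gives such a direction. Hence either `z` is a
vertex, or `z` lies strictly between two vertices `u`, `v` on opposite sides of `H`, and then every
segment of `P` through a point of `[u, v]` has its direction parallel to `v - u`, so `[u, v]` is an
edge. If no edge crosses `H`, all extreme points of `P ∩ H` are in `W`, and Krein–Milman gives
`P ∩ H = conv W`. Conversely, if an edge crosses `H`, its point on `H` lies in `conv W`; as the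
edge is a face, some point of `W` lies on it, but the only vertices on an edge are its endpoints.
-/

open Set

section FaceDirection

variable {E : Type*} [AddCommGroup E] [Module ℝ E] {C : Set E} {z d e : E}

/-- For convex `C`, the direction space of the smallest face of `C` containing `z`. -/
def faceDirection (C : Set E) (z : E) : Set E :=
  {d | ∃ ε : ℝ, 0 < ε ∧ z + ε • d ∈ C ∧ z - ε • d ∈ C}

theorem eq_zero_of_mem_faceDirection (hz : z ∈ C.extremePoints ℝ) (hd : d ∈ faceDirection C z) :
    d = 0 := by
  obtain ⟨ε, hε, h₁, h₂⟩ := hd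
  have hmid : z ∈ openSegment ℝ (z + ε • d) (z - ε • d) :=
    ⟨1 / 2, 1 / 2, by norm_num, by norm_num, by norm_num, by module⟩
  simpa [hε.ne'] using hz.2 h₁ h₂ hmid

theorem eq_zero_of_mem_faceDirection_of_map_eq_zero {f : E →ₗ[ℝ] ℝ} {c : ℝ}
    (hz : z ∈ (C ∩ {x | f x = c}).extremePoints ℝ) (hd : d ∈ faceDirection C z) (hfd : f d = 0) :
    d = 0 := by
  obtain ⟨ε, hε, h₁, h₂⟩ := hd
  have hzc : f z = c := hz.1.2
  exact eq_zero_of_mem_faceDirection hz ⟨ε, hε, ⟨h₁, by simp [hzc, hfd]⟩, ⟨h₂, by simp [hzc, hfd]⟩⟩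

namespace Convex

variable (hC : Convex ℝ C)
include hC

theorem add_smul_mem_of_le (hz : z ∈ C) {s t : ℝ} (h : z + s • d ∈ C) (ht : 0 ≤ t)
    (hts : t ≤ s) : z + t • d ∈ C := by
  rcases ht.eq_or_lt with rfl | ht
  · simpa using hz
  have hs := ht.trans_le hts
  simpa [smul_smul, div_mul_cancel₀ _ hs.ne'] using
    hC.add_smul_mem hz h ⟨div_nonneg ht.le hs.le, (div_le_one hs).2 hts⟩

theorem mem_faceDirection_of_add_of_sub (hz : z ∈ C) {s t : ℝ} (hs : 0 < s) (ht : 0 < t)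
    (h₁ : z + s • d ∈ C) (h₂ : z - t • d ∈ C) : d ∈ faceDirection C z := by
  have hst := lt_min hs ht
  refine ⟨min s t, hst, hC.add_smul_mem_of_le hz h₁ hst.le (min_le_left _ _), ?_⟩
  rw [sub_eq_add_neg, ← smul_neg] at h₂ ⊢
  exact hC.add_smul_mem_of_le hz h₂ hst.le (min_le_right _ _)

theorem mem_of_mem_faceDirection (hd : d ∈ faceDirection C z) : z ∈ C := by
  obtain ⟨ε, -, h₁, h₂⟩ := hd
  convert hC h₁ h₂ (by norm_num : (0 : ℝ) ≤ 1 / 2) (by norm_num : (0 : ℝ) ≤ 1 / 2) (by norm_num)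
    using 1
  module

theorem smul_mem_faceDirection (hd : d ∈ faceDirection C z) (r : ℝ) :
    r • d ∈ faceDirection C z := by
  have hz := hC.mem_of_mem_faceDirection hd
  obtain ⟨ε, hε, h₁, h₂⟩ := hd
  rcases lt_trichotomy r 0 with hr | rfl | hr
  · have hr' : (ε / -r) • r • d = -(ε • d) := by
      rw [smul_smul, div_neg, neg_mul, div_mul_cancel₀ _ hr.ne, neg_smul]
    refine ⟨ε / -r, div_pos hε (neg_pos.2 hr), ?_, ?_⟩
    · rwa [hr', ← sub_eq_add_neg]
    · rwa [hr', sub_neg_eq_add]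
  · exact ⟨1, one_pos, by simpa using hz, by simpa using hz⟩
  · refine ⟨ε / r, div_pos hε hr, ?_, ?_⟩
    all_goals rwa [smul_smul, div_mul_cancel₀ _ hr.ne']

theorem add_mem_faceDirection (hd : d ∈ faceDirection C z) (he : e ∈ faceDirection C z) :
    d + e ∈ faceDirection C z := by
  have hz := hC.mem_of_mem_faceDirection hd
  obtain ⟨ε₁, hε₁, hd₁, hd₂⟩ := hd
  obtain ⟨ε₂, hε₂, he₁, he₂⟩ := he
  have hη := lt_min hε₁ hε₂
  set η := min ε₁ ε₂
  have hd₁' := hC.add_smul_mem_of_le hz hd₁ hη.le (min_le_left _ _)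
  have he₁' := hC.add_smul_mem_of_le hz he₁ hη.le (min_le_right _ _)
  rw [sub_eq_add_neg, ← smul_neg] at hd₂ he₂
  have hd₂' := hC.add_smul_mem_of_le hz hd₂ hη.le (min_le_left _ _)
  have he₂' := hC.add_smul_mem_of_le hz he₂ hη.le (min_le_right _ _)
  have half : (0 : ℝ) ≤ 1 / 2 := by norm_num
  refine ⟨η / 2, half_pos hη, ?_, ?_⟩
  · convert hC hd₁' he₁' half half (by norm_num) using 1; module
  · convert hC hd₂' he₂' half half (by norm_num) using 1; module

theorem map_smul_eq_map_smul_of_mem_faceDirection {f : E →ₗ[ℝ] ℝ} {c : ℝ}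
    (hz : z ∈ (C ∩ {x | f x = c}).extremePoints ℝ) (hd : d ∈ faceDirection C z)
    (he : e ∈ faceDirection C z) : f d • e = f e • d := by
  have hg : f d • e - f e • d ∈ faceDirection C z := by
    simpa [sub_eq_add_neg] using
      hC.add_mem_faceDirection (hC.smul_mem_faceDirection he (f d))
        (hC.smul_mem_faceDirection hd (-f e))
  refine sub_eq_zero.1 (eq_zero_of_mem_faceDirection_of_map_eq_zero hz hg ?_)
  simp [mul_comm]

theorem sub_mem_faceDirection_of_mem_openSegment {a b : E} (ha : a ∈ C) (hb : b ∈ C)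
    (h : z ∈ openSegment ℝ a b) : a - z ∈ faceDirection C z := by
  have hz := hC.openSegment_subset ha hb h
  obtain ⟨α, β, hα, hβ, hαβ, rfl⟩ := h
  obtain rfl : α = 1 - β := by linarith
  refine hC.mem_faceDirection_of_add_of_sub hz one_pos (div_pos hα hβ) ?_ ?_
  · convert ha using 1; module
  · convert hb using 1; match_scalars <;> field_simp <;> ring

theorem faceDirection_subset {y w : E} (hw : w ∈ C) {θ : ℝ} (hθ₀ : 0 ≤ θ) (hθ₁ : θ < 1) :
    faceDirection C y ⊆ faceDirection C (y + θ • (w - y)) := by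
  rintro d ⟨ε, hε, h₁, h₂⟩
  refine ⟨(1 - θ) * ε, mul_pos (sub_pos.2 hθ₁) hε, ?_, ?_⟩
  · convert hC h₁ hw (sub_nonneg.2 hθ₁.le) hθ₀ (by ring) using 1; module
  · convert hC h₂ hw (sub_nonneg.2 hθ₁.le) hθ₀ (by ring) using 1; module

theorem nonneg_of_add_smul_sub_mem {u v : E} (hu : u ∈ C.extremePoints ℝ) (hv : v ∈ C)
    (huv : u ≠ v) {τ : ℝ} (hx : u + τ • (v - u) ∈ C) : 0 ≤ τ := by
  by_contra! hτ
  have hdir : v - u ∈ faceDirection C u :=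
    hC.mem_faceDirection_of_add_of_sub hu.1 one_pos (neg_pos.2 hτ) (by simpa using hv)
      (by rwa [neg_smul, sub_neg_eq_add])
  exact huv (sub_eq_zero.1 (eq_zero_of_mem_faceDirection hu hdir)).symm

theorem add_smul_sub_mem_segment {u v : E} (hu : u ∈ C.extremePoints ℝ)
    (hv : v ∈ C.extremePoints ℝ) (huv : u ≠ v) {τ : ℝ} (hx : u + τ • (v - u) ∈ C) :
    u + τ • (v - u) ∈ segment ℝ u v := by
  have h₀ := hC.nonneg_of_add_smul_sub_mem hu hv.1 huv hx
  have h₁ := hC.nonneg_of_add_smul_sub_mem hv hu.1 huv.symm (τ := 1 - τ)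
    (by convert hx using 1; module)
  rw [segment_eq_image']
  exact ⟨τ, ⟨h₀, by linarith⟩, rfl⟩

theorem isExtreme_segment_of_mem_extremePoints_inter {f : E →ₗ[ℝ] ℝ} {c : ℝ} {u v : E}
    (hz : z ∈ (C ∩ {x | f x = c}).extremePoints ℝ) (hu : u ∈ C.extremePoints ℝ)
    (hv : v ∈ C.extremePoints ℝ) (hfuv : f u ≠ f v) (hzuv : z ∈ openSegment ℝ u v) :
    IsExtreme ℝ C (segment ℝ u v) := by
  have huv : u ≠ v := fun h => hfuv (congrArg f h)
  have hf : f (v - u) ≠ 0 := by simpa [sub_eq_zero] using hfuv.symm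
  rw [openSegment_eq_image'] at hzuv
  obtain ⟨τ, ⟨hτ₀, hτ₁⟩, rfl⟩ := hzuv
  have hvu : v - u ∈ faceDirection C (u + τ • (v - u)) :=
    hC.mem_faceDirection_of_add_of_sub hz.1.1 (sub_pos.2 hτ₁) hτ₀
      (by convert hv.1 using 1; module) (by convert hu.1 using 1; module)
  refine ⟨hC.segment_subset hu.1 hv.1, fun x₁ hx₁ x₂ hx₂ y hy hyx => ?_⟩
  rw [segment_eq_image'] at hy
  obtain ⟨β, ⟨hβ₀, hβ₁⟩, rfl⟩ := hy
  have hdir := hC.sub_mem_faceDirection_of_mem_openSegment hx₁ hx₂ hyx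
  -- Move the direction `x₁ - y` from `y` to `z`, which lies in `[y, u]` or in `[y, v]`.
  replace hdir : x₁ - (u + β • (v - u)) ∈ faceDirection C (u + τ • (v - u)) := by
    rcases le_total β τ with hβτ | hτβ
    · have hβ : β < 1 := hβτ.trans_lt hτ₁
      have : 1 - β ≠ 0 := (sub_pos.2 hβ).ne'
      convert hC.faceDirection_subset hv.1 (div_nonneg (sub_nonneg.2 hβτ) (sub_pos.2 hβ).le)
        ((div_lt_one (sub_pos.2 hβ)).2 (by linarith)) hdir using 2
      match_scalars <;> field_simp <;> ring
    · have hβ : 0 < β := hτ₀.trans_le hτβ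
      have : β ≠ 0 := hβ.ne'
      convert hC.faceDirection_subset hu.1 (div_nonneg (sub_nonneg.2 hτβ) hβ.le)
        ((div_lt_one hβ).2 (by linarith)) hdir using 2
      match_scalars <;> field_simp <;> ring
  have hpar := hC.map_smul_eq_map_smul_of_mem_faceDirection hz hvu hdir
  have hx₁eq : x₁ = u + (β + f (x₁ - (u + β • (v - u))) / f (v - u)) • (v - u) := by
    have : x₁ - (u + β • (v - u)) = (f (x₁ - (u + β • (v - u))) / f (v - u)) • (v - u) := by
      rw [div_eq_inv_mul, mul_smul, ← hpar, inv_smul_smul₀ hf]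
    linear_combination (norm := module) this
  rw [hx₁eq] at hx₁ ⊢
  exact hC.add_smul_sub_mem_segment hu hv huv hx₁

end Convex

end FaceDirection

section Hyperplane

variable {E : Type*} [AddCommGroup E] [Module ℝ E] {S : Set E} {z : E}

theorem exists_subset_forall_mem_openSegment_of_mem_convexHull (hz : z ∈ convexHull ℝ S) :
    ∃ T ⊆ S, z ∈ convexHull ℝ T ∧ ∀ p ∈ T, ∃ b ∈ convexHull ℝ S, z ∈ openSegment ℝ p b := by
  classical
  obtain ⟨ι, _, p, w, hpS, -, hw₀, hw₁, rfl⟩ := eq_pos_convex_span_of_mem_convexHull hz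
  refine ⟨range p, hpS, (convex_convexHull ℝ _).sum_mem (fun i _ => (hw₀ i).le) hw₁
    (fun i _ => subset_convexHull ℝ _ (mem_range_self i)), ?_⟩
  rintro _ ⟨i, rfl⟩
  set z := ∑ j, w j • p j
  have hwi := hw₀ i
  have hi : 0 < 1 + w i := by linarith
  -- `b := z - w i • (p i - z)` has the nonnegative weights `(1 + w i) * w j - [j = i] * w i`.
  have hb : (1 + w i) • z - w i • p i ∈ convexHull ℝ S := by
    have := (convex_convexHull ℝ S).sum_mem (t := Finset.univ)
      (w := fun j => (1 + w i) * w j - if j = i then w i else 0) (z := p) ?_ ?_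
      (fun j _ => subset_convexHull ℝ _ (hpS (mem_range_self j)))
    · convert this using 1
      simp [sub_smul, Finset.sum_sub_distrib, mul_smul, ← Finset.smul_sum, z]
    · intro j _
      split_ifs with h
      · subst h; nlinarith
      · simpa using mul_nonneg hi.le (hw₀ j).le
    · simp [Finset.sum_sub_distrib, ← Finset.mul_sum, hw₁]
  refine ⟨_, hb, w i / (1 + w i), 1 / (1 + w i), div_pos hwi hi, one_div_pos.2 hi,
    by field_simp; ring, ?_⟩
  match_scalars
  · ring
  · field_simp

theorem mem_or_mem_openSegment_of_mem_extremePoints_inter {f : E →ₗ[ℝ] ℝ} {c : ℝ}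
    (hz : z ∈ (convexHull ℝ S ∩ {x | f x = c}).extremePoints ℝ) :
    z ∈ S ∨ ∃ u ∈ S, ∃ v ∈ S, f u < c ∧ c < f v ∧ z ∈ openSegment ℝ u v := by
  have hzc : f z = c := hz.1.2
  obtain ⟨T, hTS, hzT, hT⟩ := exists_subset_forall_mem_openSegment_of_mem_convexHull hz.1.1
  have hdir : ∀ p ∈ T, p - z ∈ faceDirection (convexHull ℝ S) z := fun p hp => by
    obtain ⟨b, hb, hpb⟩ := hT p hp
    exact (convex_convexHull ℝ S).sub_mem_faceDirection_of_mem_openSegment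
      (subset_convexHull ℝ S (hTS hp)) hb hpb
  by_cases hon : ∃ p ∈ T, f p = c
  · obtain ⟨p, hp, hpc⟩ := hon
    left
    have := eq_zero_of_mem_faceDirection_of_map_eq_zero hz (hdir p hp) (by simp [hpc, hzc])
    rw [← sub_eq_zero.1 this]
    exact hTS hp
  push Not at hon
  obtain ⟨u, hu, hfu⟩ : ∃ u ∈ T, f u < c := by
    by_contra! h
    have : c < f z := convexHull_min (fun p hp => (h p hp).lt_of_ne' (hon p hp))
      (convex_halfSpace_gt f.isLinear c) hzT
    exact this.ne' hzc
  obtain ⟨v, hv, hfv⟩ : ∃ v ∈ T, c < f v := by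
    by_contra! h
    have : f z < c := convexHull_min (fun p hp => (h p hp).lt_of_ne (hon p hp))
      (convex_halfSpace_lt f.isLinear c) hzT
    exact this.ne hzc
  refine Or.inr ⟨u, hTS hu, v, hTS hv, hfu, hfv, ?_⟩
  have hpar := (convex_convexHull ℝ S).map_smul_eq_map_smul_of_mem_faceDirection hz
    (hdir u hu) (hdir v hv)
  simp only [map_sub, hzc] at hpar
  have hne : f v - f u ≠ 0 := by linarith
  have key : (f v - f u) • z = (f v - c) • u + (c - f u) • v := by
    linear_combination (norm := module) hpar
  refine ⟨(f v - c) / (f v - f u), (c - f u) / (f v - f u), div_pos (by linarith) (by linarith),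
    div_pos (by linarith) (by linarith), by field_simp; ring, ?_⟩
  rw [div_eq_inv_mul, div_eq_inv_mul, mul_smul, mul_smul, ← smul_add, ← key,
    inv_smul_smul₀ hne]

theorem IsExtreme.exists_mem_of_mem_convexHull {P F : Set E} (hF : IsExtreme ℝ P F)
    (hSP : convexHull ℝ S ⊆ P) (hzF : z ∈ F) (hzS : z ∈ convexHull ℝ S) : ∃ p ∈ S, p ∈ F := by
  obtain ⟨T, hTS, hzT, hT⟩ := exists_subset_forall_mem_openSegment_of_mem_convexHull hzS
  obtain ⟨p, hp⟩ : T.Nonempty := by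
    by_contra! h
    simp [h] at hzT
  obtain ⟨b, hb, hpb⟩ := hT p hp
  exact ⟨p, hTS hp, hF.left_mem_of_mem_openSegment (hSP (subset_convexHull ℝ S (hTS hp)))
    (hSP hb) hzF hpb⟩

theorem IsExtreme.not_lt_and_lt_of_inter_eq_convexHull {P X : Set E} {f : E →ₗ[ℝ] ℝ} {c : ℝ}
    {u v : E} (hedge : IsExtreme ℝ P (segment ℝ u v)) (hX : X ⊆ P.extremePoints ℝ)
    (heq : P ∩ {x | f x = c} = convexHull ℝ (X ∩ {x | f x = c})) : ¬(f u < c ∧ c < f v) := by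
  rintro ⟨hfu, hfv⟩
  obtain ⟨z, hz, hzc⟩ : c ∈ f '' segment ℝ u v := by
    rw [show f '' segment ℝ u v = _ from image_segment ℝ f.toAffineMap u v]
    show c ∈ segment ℝ (f u) (f v)
    rw [segment_eq_Icc (hfu.trans hfv).le]
    exact ⟨hfu.le, hfv.le⟩
  obtain ⟨w, ⟨hwX, hwc⟩, hw⟩ := hedge.exists_mem_of_mem_convexHull (heq ▸ inter_subset_left) hz
    (heq ▸ ⟨hedge.subset hz, hzc⟩)
  rcases (mem_extremePoints_iff_forall_segment.1 (hX hwX)).2 u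
    (hedge.subset (left_mem_segment ℝ u v)) v (hedge.subset (right_mem_segment ℝ u v)) hw
    with rfl | rfl
  · exact hfu.ne hwc
  · exact hfv.ne' hwc

end Hyperplane

theorem inter_hyperplane_subset_convexHull {E : Type*} [NormedAddCommGroup E] [NormedSpace ℝ E]
    [FiniteDimensional ℝ E] {X : Set E} {f : E →ₗ[ℝ] ℝ} {c : ℝ} (hX : X.Finite)
    (hXext : X ⊆ (convexHull ℝ X).extremePoints ℝ)
    (hedge : ∀ u ∈ X, ∀ v ∈ X, IsExtreme ℝ (convexHull ℝ X) (segment ℝ u v) →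
      ¬(f u < c ∧ c < f v)) :
    convexHull ℝ X ∩ {x | f x = c} ⊆ convexHull ℝ (X ∩ {x | f x = c}) := by
  set K := convexHull ℝ X ∩ {x | f x = c}
  have hK : Convex ℝ K := (convex_convexHull ℝ X).inter (convex_hyperplane f.isLinear c)
  have hKc : IsCompact K := (hX.isCompact_convexHull (𝕜 := ℝ)).inter_right
    (isClosed_eq f.continuous_of_finiteDimensional continuous_const)
  have hext : K.extremePoints ℝ ⊆ X ∩ {x | f x = c} := fun z hz => by
    refine ⟨?_, hz.1.2⟩
    rcases mem_or_mem_openSegment_of_mem_extremePoints_inter hz with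
      hzX | ⟨u, hu, v, hv, hfu, hfv, hzuv⟩
    · exact hzX
    · exact absurd ⟨hfu, hfv⟩ (hedge u hu v hv
        ((convex_convexHull ℝ X).isExtreme_segment_of_mem_extremePoints_inter hz (hXext hu)
          (hXext hv) (hfu.trans hfv).ne hzuv))
  calc K = closure (convexHull ℝ (K.extremePoints ℝ)) :=
        (closure_convexHull_extremePoints hKc hK).symm
    _ ⊆ closure (convexHull ℝ (X ∩ {x | f x = c})) := closure_mono (convexHull_mono hext)
    _ = convexHull ℝ (X ∩ {x | f x = c}) :=
        ((hX.inter_of_left _).isClosed_convexHull (𝕜 := ℝ)).closure_eq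

theorem stmt_15_general {n : ℕ} (X : Set (Fin n → ℝ)) (hXfin : X.Finite)
    (P : Set (Fin n → ℝ)) (hP : P = convexHull ℝ X)
    (hvert : X = Set.extremePoints ℝ P)
    (f : (Fin n → ℝ) →ₗ[ℝ] ℝ) (c : ℝ) :
    ((∀ u v : Fin n → ℝ, u ∈ X → v ∈ X → u ≠ v → IsExtreme ℝ P (segment ℝ u v) →
        ((f u ≤ c ∧ f v ≤ c) ∨ (c ≤ f u ∧ c ≤ f v))) ↔
      P ∩ {x | f x = c} = convexHull ℝ (X ∩ {x | f x = c})) := by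
  subst hP
  constructor
  · intro hedge
    refine (inter_hyperplane_subset_convexHull hXfin hvert.subset
      fun u hu v hv h ⟨hfu, hfv⟩ => ?_).antisymm
        (convexHull_min (inter_subset_inter_left _ (subset_convexHull ℝ X))
          ((convex_convexHull ℝ X).inter (convex_hyperplane f.isLinear c)))
    rcases hedge u v hu hv (by rintro rfl; linarith) h with ⟨-, h'⟩ | ⟨h', -⟩ <;> linarith
  · rintro heq u v - - - hedge
    have h₁ := hedge.not_lt_and_lt_of_inter_eq_convexHull hvert.subset heq
    have h₂ := (segment_symm ℝ u v ▸ hedge).not_lt_and_lt_of_inter_eq_convexHull hvert.subset heq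
    grind

theorem stmt_15 {n : ℕ} (X : Set (Fin n → ℝ)) (hXfin : X.Finite)
    (P : Set (Fin n → ℝ)) (hP : P = convexHull ℝ X)
    (hvert : X = Set.extremePoints ℝ P)
    (f : (Fin n → ℝ) →ₗ[ℝ] ℝ) (c : ℝ)
    (hmeet : ∃ x ∈ P, f x = c)
    (hbelow : ∃ x ∈ P, f x < c) (habove : ∃ x ∈ P, c < f x) :
    ((∀ u v : Fin n → ℝ, u ∈ X → v ∈ X → u ≠ v → IsExtreme ℝ P (segment ℝ u v) →
        ((f u ≤ c ∧ f v ≤ c) ∨ (c ≤ f u ∧ c ≤ f v))) ↔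
      P ∩ {x | f x = c} = convexHull ℝ (X ∩ {x | f x = c})) :=
  stmt_15_general X hXfin P hP hvert f c
end

section
/- For n ≥ r + 2 ≥ 4, the base polytope of the uniform matroid U_{n,r} admits a nontrivial hyperplane split: with E1 = {1,...,k}, E2 = {k+1,...,n} (2 ≤ k ≤ ⌊n/2⌋) and suitable a1, a2 as in the good-partition condition, the families B1 = {B : |B| = r, |B ∩ E1| ≤ r1 − a1} and B2 = {B : |B| = r, |B ∩ E2| ≤ r2 − a2} are base families of matroids, their union is all r-subsets of {1,...,n}, both are proper subfamilies, their intersection is nonempty and is the base family of a matroid. -/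
/-!
Every family involved is cut out of the `r`-subsets of `{1, …, n}` by bounds on `|B ∩ E₁|`;
inside the ground set a bound on `|B ∩ E₂|` is a lower bound on `|B ∩ E₁|`. Such interval
families satisfy basis exchange: to replace `e ∈ B \ B'`, take `f ∈ B' \ B` on the same side of
`E₁` as `e`, which leaves `|B ∩ E₁|` unchanged; if there is none, all of `B' \ B` lies on the
other side, so `|B' ∩ E₁|` is strictly beyond `|B ∩ E₁|` in the direction the swap moves it, and
the bounds survive. With `a₁ = 1` the bounds are `min(k, r) - 1` on `E₁` and `r + 1 - min(k, r)`
on `E₂`, which no `r`-set violates simultaneously; witnesses with prescribed split sizes give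
properness and nonemptiness.
-/

/-- The basis exchange property for a family of finite sets. -/
def FinsetExchange (P : Finset ℕ → Prop) : Prop :=
  ∀ B1 B2, P B1 → P B2 → ∀ e ∈ B1 \ B2, ∃ f ∈ B2 \ B1, P (insert f (B1.erase e))

open Finset

section Counting

variable {α : Type*} [DecidableEq α]

lemma card_insert_erase_inter_add {B : Finset α} {e f : α} (S : Finset α) (he : e ∈ B)
    (hf : f ∉ B) :
    #(insert f (B.erase e) ∩ S) + (if e ∈ S then 1 else 0) =
      #(B ∩ S) + (if f ∈ S then 1 else 0) := by
  simp only [← filter_mem_eq_inter, card_filter]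
  rw [sum_insert fun h => hf (mem_of_mem_erase h), ← add_sum_erase B _ he]
  ac_rfl

lemma card_inter_lt_of_disjoint_sdiff {B B' S : Finset α} {e : α} (hS : Disjoint (B' \ B) S)
    (he : e ∈ B \ B') (heS : e ∈ S) : #(B' ∩ S) < #(B ∩ S) := by
  obtain ⟨heB, heB'⟩ := mem_sdiff.1 he
  refine card_lt_card ((ssubset_iff_of_subset fun x hx => ?_).2 ⟨e, mem_inter.2 ⟨heB, heS⟩, ?_⟩)
  · obtain ⟨hxB', hxS⟩ := mem_inter.1 hx
    by_contra hxB
    exact disjoint_left.1 hS (mem_sdiff.2 ⟨hxB', fun h => hxB (mem_inter.2 ⟨h, hxS⟩)⟩) hxS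
  · exact fun h => heB' (mem_inter.1 h).1

lemma card_inter_lt_of_sdiff_subset {B B' S : Finset α} {e : α} (hcard : #B = #B')
    (hS : B' \ B ⊆ S) (he : e ∈ B \ B') (heS : e ∉ S) : #(B ∩ S) < #(B' ∩ S) := by
  obtain ⟨heB, heB'⟩ := mem_sdiff.1 he
  have hlt : #(B' \ S) < #(B \ S) := by
    refine card_lt_card ((ssubset_iff_of_subset fun x hx => ?_).2 ⟨e, mem_sdiff.2 ⟨heB, heS⟩, ?_⟩)
    · obtain ⟨hxB', hxS⟩ := mem_sdiff.1 hx
      by_contra hxB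
      exact hxS (hS (mem_sdiff.2 ⟨hxB', fun h => hxB (mem_sdiff.2 ⟨h, hxS⟩)⟩))
    · exact fun h => heB' (mem_sdiff.1 h).1
  have := card_sdiff_add_card_inter B S
  have := card_sdiff_add_card_inter B' S
  omega

end Counting

theorem finsetExchange_card_inter_mem_Icc (E S : Finset ℕ) (r lo hi : ℕ) :
    FinsetExchange (fun B => B ⊆ E ∧ #B = r ∧ lo ≤ #(B ∩ S) ∧ #(B ∩ S) ≤ hi) := by
  rintro B B' ⟨hBE, hB, hlo, hhi⟩ ⟨hB'E, hB', hlo', hhi'⟩ e he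
  obtain ⟨heB, heB'⟩ := mem_sdiff.1 he
  have hcard : #B = #B' := hB.trans hB'.symm
  suffices ∃ f ∈ B' \ B, lo ≤ #(insert f (B.erase e) ∩ S) ∧ #(insert f (B.erase e) ∩ S) ≤ hi by
    obtain ⟨f, hf, hfS⟩ := this
    obtain ⟨hfB', hfB⟩ := mem_sdiff.1 hf
    refine ⟨f, hf, insert_subset (hB'E hfB') ((erase_subset e B).trans hBE), ?_, hfS⟩
    rw [card_insert_of_notMem fun h => hfB (mem_of_mem_erase h), card_erase_add_one heB, hB]
  by_cases hsame : ∃ f ∈ B' \ B, (f ∈ S ↔ e ∈ S)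
  · obtain ⟨f, hf, hfS⟩ := hsame
    have hswap := card_insert_erase_inter_add S heB (mem_sdiff.1 hf).2
    simp only [hfS] at hswap
    exact ⟨f, hf, by omega, by omega⟩
  have hother : ∀ f ∈ B' \ B, (f ∈ S ↔ e ∉ S) := fun f hf => by
    have := not_exists.1 hsame f; tauto
  obtain ⟨f, hf⟩ : (B' \ B).Nonempty := by
    rw [← card_pos, ← card_sdiff_comm hcard]; exact card_pos.2 ⟨e, he⟩
  have hswap := card_insert_erase_inter_add S heB (mem_sdiff.1 hf).2
  refine ⟨f, hf, ?_⟩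
  by_cases heS : e ∈ S
  · have hlt := card_inter_lt_of_disjoint_sdiff
      (disjoint_left.2 fun x hx => (hother x hx).not.2 (not_not.2 heS)) he heS
    simp only [heS, (hother f hf).not.2 (not_not.2 heS), if_true, if_false] at hswap
    omega
  · have hlt := card_inter_lt_of_sdiff_subset hcard (fun x hx => (hother x hx).2 heS) he heS
    simp only [heS, (hother f hf).2 heS, if_true, if_false] at hswap
    omega

theorem finsetExchange_card_inter_le (E S : Finset ℕ) (r c : ℕ) :
    FinsetExchange (fun B => B ⊆ E ∧ #B = r ∧ #(B ∩ S) ≤ c) := by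
  simpa using finsetExchange_card_inter_mem_Icc E S r 0 c

section Partition

variable {α : Type*} [DecidableEq α] {S T : Finset α}

lemma card_inter_add_card_inter_of_subset_union {B : Finset α} (hST : Disjoint S T)
    (hB : B ⊆ S ∪ T) : #(B ∩ S) + #(B ∩ T) = #B := by
  rw [← card_union_of_disjoint (hST.mono inter_subset_right inter_subset_right),
    ← inter_union_distrib_left, inter_eq_left.2 hB]

lemma exists_subset_union_card_inter_eq (hST : Disjoint S T) {t₁ t₂ : ℕ} (h₁ : t₁ ≤ #S)
    (h₂ : t₂ ≤ #T) : ∃ B ⊆ S ∪ T, #B = t₁ + t₂ ∧ #(B ∩ S) = t₁ ∧ #(B ∩ T) = t₂ := by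
  obtain ⟨B₁, hB₁, hB₁c⟩ := exists_subset_card_eq h₁
  obtain ⟨B₂, hB₂, hB₂c⟩ := exists_subset_card_eq h₂
  have hS : (B₁ ∪ B₂) ∩ S = B₁ := by
    rw [union_inter_distrib_right, inter_eq_left.2 hB₁,
      disjoint_iff_inter_eq_empty.1 (hST.symm.mono_left hB₂), union_empty]
  have hT : (B₁ ∪ B₂) ∩ T = B₂ := by
    rw [union_inter_distrib_right, inter_eq_left.2 hB₂,
      disjoint_iff_inter_eq_empty.1 (hST.mono_left hB₁), empty_union]
  refine ⟨B₁ ∪ B₂, union_subset_union hB₁ hB₂, ?_, by rw [hS, hB₁c], by rw [hT, hB₂c]⟩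
  rw [card_union_of_disjoint (hST.mono hB₁ hB₂), hB₁c, hB₂c]

end Partition

theorem finsetExchange_card_inter_le_card_inter_le {S T : Finset ℕ} (hST : Disjoint S T)
    (r c₁ c₂ : ℕ) :
    FinsetExchange (fun B => B ⊆ S ∪ T ∧ #B = r ∧ #(B ∩ S) ≤ c₁ ∧ #(B ∩ T) ≤ c₂) := by
  have hfamily : (fun B => B ⊆ S ∪ T ∧ #B = r ∧ #(B ∩ S) ≤ c₁ ∧ #(B ∩ T) ≤ c₂) =
      fun B => B ⊆ S ∪ T ∧ #B = r ∧ r - c₂ ≤ #(B ∩ S) ∧ #(B ∩ S) ≤ c₁ := by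
    funext B
    refine propext ⟨fun ⟨hB, hr, h₁, h₂⟩ => ?_, fun ⟨hB, hr, h₁, h₂⟩ => ?_⟩ <;>
      have := card_inter_add_card_inter_of_subset_union hST hB
    exacts [⟨hB, hr, by omega, h₁⟩, ⟨hB, hr, h₂, by omega⟩]
  rw [hfamily]
  exact finsetExchange_card_inter_mem_Icc _ _ r _ _

lemma Icc_one_eq_union {n k : ℕ} (hkn : k ≤ n) : Icc 1 n = Icc 1 k ∪ Icc (k + 1) n := by
  ext x; simp only [mem_union, mem_Icc]; omega

lemma disjoint_Icc_one_Icc_succ (n k : ℕ) : Disjoint (Icc 1 k) (Icc (k + 1) n) :=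
  disjoint_left.2 fun x hx hx' => by simp only [mem_Icc] at hx hx'; omega

lemma exists_subset_Icc_card_inter_eq {n k t₁ t₂ : ℕ} (hkn : k ≤ n) (h₁ : t₁ ≤ k)
    (h₂ : t₂ ≤ n - k) : ∃ B ⊆ Icc 1 n, #B = t₁ + t₂ ∧
      #(B ∩ Icc 1 k) = t₁ ∧ #(B ∩ Icc (k + 1) n) = t₂ := by
  rw [Icc_one_eq_union hkn]
  exact exists_subset_union_card_inter_eq (disjoint_Icc_one_Icc_succ n k) (by simpa using h₁)
    (by simpa using h₂)

theorem stmt_17 (n r k : ℕ) (hr : 2 ≤ r) (hn : r + 2 ≤ n) (hk : 2 ≤ k) (hk2 : k ≤ n / 2) :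
    ∃ a1 a2 : ℕ, 0 < a1 ∧ a1 < min k r ∧ 0 < a2 ∧ a2 < min (n - k) r ∧
      min k r + min (n - k) r = r + a1 + a2 ∧
      -- B1 is the base family of a matroid
      FinsetExchange (fun B => B ⊆ Finset.Icc 1 n ∧ B.card = r ∧
        (B ∩ Finset.Icc 1 k).card ≤ min k r - a1) ∧
      -- B2 is the base family of a matroid
      FinsetExchange (fun B => B ⊆ Finset.Icc 1 n ∧ B.card = r ∧
        (B ∩ Finset.Icc (k + 1) n).card ≤ min (n - k) r - a2) ∧
      -- B1 ∪ B2 is the set of all r-subsets of {1, ..., n}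
      (∀ B : Finset ℕ, (B ⊆ Finset.Icc 1 n ∧ B.card = r) ↔
        ((B ⊆ Finset.Icc 1 n ∧ B.card = r ∧
            (B ∩ Finset.Icc 1 k).card ≤ min k r - a1) ∨
          (B ⊆ Finset.Icc 1 n ∧ B.card = r ∧
            (B ∩ Finset.Icc (k + 1) n).card ≤ min (n - k) r - a2))) ∧
      -- B1 is proper
      (∃ B : Finset ℕ, B ⊆ Finset.Icc 1 n ∧ B.card = r ∧
        ¬ (B ∩ Finset.Icc 1 k).card ≤ min k r - a1) ∧
      -- B2 is proper
      (∃ B : Finset ℕ, B ⊆ Finset.Icc 1 n ∧ B.card = r ∧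
        ¬ (B ∩ Finset.Icc (k + 1) n).card ≤ min (n - k) r - a2) ∧
      -- B1 ∩ B2 is nonempty
      (∃ B : Finset ℕ, B ⊆ Finset.Icc 1 n ∧ B.card = r ∧
        (B ∩ Finset.Icc 1 k).card ≤ min k r - a1 ∧
        (B ∩ Finset.Icc (k + 1) n).card ≤ min (n - k) r - a2) ∧
      -- B1 ∩ B2 is the base family of a matroid
      FinsetExchange (fun B => B ⊆ Finset.Icc 1 n ∧ B.card = r ∧
        (B ∩ Finset.Icc 1 k).card ≤ min k r - a1 ∧
        (B ∩ Finset.Icc (k + 1) n).card ≤ min (n - k) r - a2) := by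
  have hkn : k ≤ n := by omega
  refine ⟨1, min k r + min (n - k) r - r - 1, by omega, by omega, by omega, by omega, by omega,
    finsetExchange_card_inter_le _ _ _ _, finsetExchange_card_inter_le _ _ _ _,
    fun B => ⟨fun ⟨hB, hBr⟩ => ?_, ?_⟩, ?_, ?_, ?_, ?_⟩
  · have := card_inter_add_card_inter_of_subset_union (disjoint_Icc_one_Icc_succ n k)
      (Icc_one_eq_union hkn ▸ hB)
    by_cases h : #(B ∩ Icc 1 k) ≤ min k r - 1
    exacts [Or.inl ⟨hB, hBr, h⟩, Or.inr ⟨hB, hBr, by omega⟩]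
  · rintro (⟨hB, hBr, -⟩ | ⟨hB, hBr, -⟩) <;> exact ⟨hB, hBr⟩
  · obtain ⟨B, hB, hBr, h₁, -⟩ :=
      exists_subset_Icc_card_inter_eq (t₁ := min k r) (t₂ := r - min k r) hkn (by omega) (by omega)
    exact ⟨B, hB, by omega, by omega⟩
  · obtain ⟨B, hB, hBr, -, h₂⟩ := exists_subset_Icc_card_inter_eq (t₁ := r - min (n - k) r)
      (t₂ := min (n - k) r) hkn (by omega) (by omega)
    exact ⟨B, hB, by omega, by omega⟩
  · obtain ⟨B, hB, hBr, h₁, h₂⟩ := exists_subset_Icc_card_inter_eq (t₁ := min k r - 1)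
      (t₂ := r + 1 - min k r) hkn (by omega) (by omega)
    exact ⟨B, hB, by omega, by omega, by omega⟩
  · rw [Icc_one_eq_union hkn]
    exact finsetExchange_card_inter_le_card_inter_le (disjoint_Icc_one_Icc_succ n k) _ _ _
end
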